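/- arXiv:1808.10191 — 8 statements merged into one kernel-verified Lean document; each statement's English description precedes it below -/
import Mathlib

section
/- For every Boolean function f : {0,1}^n → {0,1} and every a ∈ {0,1}^n, there exist indices i_1, …, i_n ∈ [n] (not necessarily distinct) such that the function g : {0,1}^n → {0,1} defined by g(x) = f((x_{i_1}, x_{i_2}, …, x_{i_n}) ⊕ a) satisfies bs(f,a) ≤ s(g,0^n). -/
open scoped Classical

/-- Pointwise XOR of Boolean vectors. -/
def bxor {n : ℕ} (x y : Fin n → Bool) : Fin n → Bool := fun i => Bool.xor (x i) (y i)

/-- Indicator vector of a set of coordinates. -/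
def eB {n : ℕ} (B : Finset (Fin n)) : Fin n → Bool := fun i => decide (i ∈ B)

/-- Standard basis vector. -/
def eI {n : ℕ} (i : Fin n) : Fin n → Bool := fun j => decide (j = i)

/-- Sensitivity of `f` at `a`. -/
def sensAt {n : ℕ} (f : (Fin n → Bool) → Bool) (a : Fin n → Bool) : ℕ :=
  (Finset.univ.filter fun i : Fin n => f (bxor a (eI i)) ≠ f a).card

/-- Sensitivity of `f`. -/
def sens {n : ℕ} (f : (Fin n → Bool) → Bool) : ℕ :=
  Finset.univ.sup fun a : Fin n → Bool => sensAt f a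

/-- Block sensitivity of `f` at `a`: the largest number of pairwise disjoint nonempty
sensitive blocks. -/
def bsAt {n : ℕ} (f : (Fin n → Bool) → Bool) (a : Fin n → Bool) : ℕ :=
  Finset.univ.sup fun S : Finset (Finset (Fin n)) =>
    if (∀ B ∈ S, B.Nonempty ∧ f (bxor a (eB B)) ≠ f a) ∧
       (∀ B ∈ S, ∀ C ∈ S, B ≠ C → Disjoint B C)
    then S.card else 0

/-- Block sensitivity of `f`. -/
def bs {n : ℕ} (f : (Fin n → Bool) → Bool) : ℕ :=
  Finset.univ.sup fun a : Fin n → Bool => bsAt f a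

/-- `x` is a monotone chain `0^n = x^0 ≺ x^1 ≺ ⋯ ≺ x^n = 1^n` in the Boolean cube
(each step strictly increases, hence flips exactly one coordinate from 0 to 1). -/
def IsChainOn {n : ℕ} (x : Fin (n + 1) → Fin n → Bool) : Prop :=
  x 0 = (fun _ => false) ∧ x (Fin.last n) = (fun _ => true) ∧
    ∀ i : Fin n, (∀ j, x i.castSucc j ≤ x i.succ j) ∧ x i.castSucc ≠ x i.succ

/-- Alternation of `f` along a chain `x`. -/
def altChain {n : ℕ} (f : (Fin n → Bool) → Bool) (x : Fin (n + 1) → Fin n → Bool) : ℕ :=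
  (Finset.univ.filter fun i : Fin n => f (x i.succ) ≠ f (x i.castSucc)).card

/-- Alternation of `f`: maximal alternation along a chain. -/
noncomputable def altF {n : ℕ} (f : (Fin n → Bool) → Bool) : ℕ :=
  Finset.univ.sup fun x : Fin (n + 1) → Fin n → Bool =>
    if IsChainOn x then altChain f x else 0

/-- Shift-invariant alternation: minimum alternation over all shifts of `f`. -/
noncomputable def saltF {n : ℕ} (f : (Fin n → Bool) → Bool) : ℕ :=
  (Finset.univ : Finset (Fin n → Bool)).inf' Finset.univ_nonempty
    fun b => altF fun x => f (bxor x b)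

/-- for every `f` and `a` there are indices `i_1, …, i_n ∈ [n]` (not
necessarily distinct) such that `g x = f ((x_{i_1}, …, x_{i_n}) ⊕ a)` satisfies
`bs(f, a) ≤ s(g, 0^n)`. -/
theorem stmt0 (n : ℕ) (f : (Fin n → Bool) → Bool) (a : Fin n → Bool) :
    ∃ idx : Fin n → Fin n,
      bsAt f a ≤ sensAt (fun x => f (bxor (fun j => x (idx j)) a)) (fun _ => false) := by
  classical
  set F : Finset (Finset (Fin n)) → ℕ := fun S =>
    if (∀ B ∈ S, B.Nonempty ∧ f (bxor a (eB B)) ≠ f a) ∧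
       (∀ B ∈ S, ∀ C ∈ S, B ≠ C → Disjoint B C)
    then S.card else 0 with hF
  have hbs : bsAt f a = Finset.univ.sup F := rfl
  obtain ⟨S, -, hSsup⟩ := Finset.exists_mem_eq_sup
    (Finset.univ : Finset (Finset (Finset (Fin n)))) Finset.univ_nonempty F
  rw [hbs, hSsup]
  by_cases hcond : (∀ B ∈ S, B.Nonempty ∧ f (bxor a (eB B)) ≠ f a) ∧
       (∀ B ∈ S, ∀ C ∈ S, B ≠ C → Disjoint B C)
  · obtain ⟨hB, hD⟩ := hcond
    rcases S.eq_empty_or_nonempty with rfl | ⟨B0, hB0⟩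
    · exact ⟨id, by simp [hF]⟩
    obtain ⟨i0, hi0⟩ := (hB B0 hB0).1
    set rep : Finset (Fin n) → Fin n := fun B => if h : B.Nonempty then h.choose else i0
      with hrep
    have hrepmem : ∀ B ∈ S, rep B ∈ B := by
      intro B hBS
      have h := (hB B hBS).1
      simp only [hrep, dif_pos h]
      exact h.choose_spec
    have huniq : ∀ B ∈ S, ∀ C ∈ S, ∀ j : Fin n, j ∈ B → j ∈ C → B = C := by
      intro B hBS C hCS j hjB hjC
      by_contra hne
      exact (Finset.disjoint_left.mp (hD B hBS C hCS hne)) hjB hjC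
    have hrepinj : ∀ B ∈ S, ∀ C ∈ S, rep B = rep C → B = C := by
      intro B hBS C hCS h
      exact huniq B hBS C hCS (rep B) (hrepmem B hBS) (h ▸ hrepmem C hCS)
    set idx : Fin n → Fin n := fun j => if h : ∃ B ∈ S, j ∈ B then rep h.choose else j
      with hidx
    have hkey : ∀ B ∈ S, ∀ j : Fin n, idx j = rep B ↔ j ∈ B := by
      intro B hBS j
      constructor
      · intro h
        simp only [hidx] at h
        split at h
        · next hex =>
            obtain ⟨hCS, hjC⟩ := hex.choose_spec
            rw [hrepinj _ hCS _ hBS h] at hjC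
            exact hjC
        · next hex =>
            exact absurd ⟨B, hBS, h ▸ hrepmem B hBS⟩ hex
      · intro hjB
        have hex : ∃ C ∈ S, j ∈ C := ⟨B, hBS, hjB⟩
        simp only [hidx, dif_pos hex]
        congr 1
        exact huniq _ hex.choose_spec.1 _ hBS j hex.choose_spec.2 hjB
    refine ⟨idx, ?_⟩
    have hgb : ∀ B ∈ S,
        (fun j => eI (rep B) (idx j)) = eB B := by
      intro B hBS
      funext j
      simp only [eI, eB, decide_eq_decide]
      exact hkey B hBS j
    simp only [hF]
    rw [if_pos (And.intro hB hD)]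
    unfold sensAt
    apply Finset.card_le_card_of_injOn rep
    · intro B hBS
      simp only [Finset.coe_filter, Finset.mem_filter, Finset.mem_univ, true_and, Set.mem_setOf_eq]
      have h1 : bxor (fun _ => false) (eI (rep B)) = eI (rep B) := by
        funext j; simp [bxor]
      have h2 : bxor (fun j => eI (rep B) (idx j)) a = bxor a (eB B) := by
        rw [hgb B hBS]; funext j; simp [bxor, Bool.xor_comm]
      have h3 : bxor (fun j => (fun _ : Fin n => false) (idx j)) a = a := by
        funext j; simp [bxor]
      rw [h1]
      simp only [h2, h3]
      exact (hB B hBS).2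
    · intro B hBS C hCS h
      exact hrepinj B (Finset.mem_coe.mp hBS) C (Finset.mem_coe.mp hCS) h
  · exact ⟨id, by simp [hF, if_neg hcond]⟩
end

section
/- For every Boolean function f : {0,1}^n → {0,1} there exists an invertible F_2-linear map L : F_2^n → F_2^n such that the function g(x) = f(L(x)) satisfies alt(f) ≤ 2·s(g) + 1; moreover the bound is already witnessed at the all-zero input, i.e., alt(f) ≤ 2·s(g,0^n) + 1. -/
open scoped Classical

/-- View a Boolean vector as a vector over `F_2`. -/
def b2z {n : ℕ} (x : Fin n → Bool) : Fin n → ZMod 2 := fun i => if x i then 1 else 0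

/-- View a vector over `F_2` as a Boolean vector. -/
def z2b {n : ℕ} (x : Fin n → ZMod 2) : Fin n → Bool := fun i => decide (x i = 1)

lemma z2b_b2z {n : ℕ} (v : Fin n → Bool) : z2b (b2z v) = v := by
  funext k
  cases h : v k <;> simp [z2b, b2z, h]


lemma altChain_le (n : ℕ) (f : (Fin n → Bool) → Bool) (x : Fin (n+1) → Fin n → Bool) :
    altChain f x ≤ 2 * (Finset.univ.filter fun i : Fin n => f (x i.succ) ≠ f (x 0)).card := by
  classical
  set B := Finset.univ.filter fun i : Fin n => f (x i.succ) ≠ f (x 0) with hB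
  set A := Finset.univ.filter fun i : Fin n => f (x i.succ) ≠ f (x i.castSucc) with hA
  set ψ : Fin n → Fin n :=
    fun i => if f (x i.succ) ≠ f (x 0) then i
      else ⟨i.val - 1, lt_of_le_of_lt (Nat.sub_le _ _) i.isLt⟩ with hψ
  have hψpos : ∀ i, f (x i.succ) ≠ f (x 0) → ψ i = i := by
    intro i h; simp only [hψ]; rw [if_pos h]
  have hψneg : ∀ i, f (x i.succ) = f (x 0) →
      ψ i = ⟨i.val - 1, lt_of_le_of_lt (Nat.sub_le _ _) i.isLt⟩ := by
    intro i h; simp only [hψ]; rw [if_neg (not_not_intro h)]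
  have maps : ∀ i ∈ A, ψ i ∈ B := by
    intro i hi
    simp only [hA, Finset.mem_filter, Finset.mem_univ, true_and] at hi
    by_cases h : f (x i.succ) ≠ f (x 0)
    · rw [hψpos i h]
      simp only [hB, Finset.mem_filter, Finset.mem_univ, true_and]
      exact h
    · push_neg at h
      have hic : f (x i.castSucc) ≠ f (x 0) := by
        rw [← h]; exact fun e => hi e.symm
      have hipos : 0 < i.val := by
        by_contra hz
        push_neg at hz
        have hz' : i.val = 0 := Nat.le_zero.mp hz
        have : i.castSucc = 0 := by
          apply Fin.ext; simpa using hz'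
        rw [this] at hic; exact hic rfl
      have hsucc : (⟨i.val - 1, lt_of_le_of_lt (Nat.sub_le _ _) i.isLt⟩ : Fin n).succ = i.castSucc := by
        apply Fin.ext
        simp [Nat.sub_add_cancel hipos]
      rw [hψneg i h]
      simp only [hB, Finset.mem_filter, Finset.mem_univ, true_and, hsucc]
      exact hic
  have fiber : ∀ b ∈ B, (A.filter fun i => ψ i = b).card ≤ 2 := by
    intro b _
    have hsub : ∀ i ∈ A.filter (fun i => ψ i = b), i.val = b.val ∨ i.val = b.val + 1 := by
      intro i hi
      have hψi : ψ i = b := (Finset.mem_filter.mp hi).2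
      by_cases h : f (x i.succ) ≠ f (x 0)
      · left; rw [hψpos i h] at hψi; rw [hψi]
      · push_neg at h
        rw [hψneg i h] at hψi
        have : i.val - 1 = b.val := congrArg Fin.val hψi
        omega
    calc (A.filter fun i => ψ i = b).card
        ≤ ({b.val, b.val + 1} : Finset ℕ).card := by
          apply Finset.card_le_card_of_injOn (fun i => i.val)
          · intro i hi
            rcases hsub i hi with h | h <;> simp [h]
          · intro i _ j _ hij
            exact Fin.ext hij
      _ ≤ 2 := Finset.card_insert_le _ _ |>.trans (by simp)
  calc A.card ≤ 2 * B.card := Finset.card_le_mul_card_image_of_maps_to maps 2 fiber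


lemma chain_equiv (n : ℕ) (x : Fin (n+1) → Fin n → Bool) (hx : IsChainOn x) :
    ∃ L : (Fin n → ZMod 2) ≃ₗ[ZMod 2] (Fin n → ZMod 2),
      z2b (L (b2z (fun _ => false))) = x 0 ∧
      ∀ i : Fin n, z2b (L (b2z (eI i))) = x i.succ := by
  classical
  obtain ⟨h0, h1, hstep⟩ := hx
  -- monotonicity
  have hmono : ∀ (j : ℕ) (hj : j < n+1) (i : Fin (n+1)), i.val ≤ j → ∀ k,
      x i k = true → x ⟨j, hj⟩ k = true := by
    intro j
    induction j with
    | zero =>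
      intro hj i hi k hk
      have : i = ⟨0, hj⟩ := Fin.ext (Nat.le_zero.mp hi)
      rwa [this] at hk
    | succ m ih =>
      intro hj i hi k hk
      rcases Nat.lt_or_ge i.val (m+1) with h | h
      · have hm : m < n + 1 := Nat.lt_of_succ_lt hj
        have hmn : m < n := Nat.succ_lt_succ_iff.mp hj
        have h1' : x ⟨m, hm⟩ k = true := ih hm i (Nat.lt_succ_iff.mp h) k hk
        have hs := (hstep ⟨m, hmn⟩).1 k
        have e1 : (⟨m, hmn⟩ : Fin n).castSucc = ⟨m, hm⟩ := rfl
        have e2 : (⟨m, hmn⟩ : Fin n).succ = ⟨m+1, hj⟩ := rfl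
        rw [e1, e2, h1'] at hs
        exact Bool.eq_true_of_true_le hs
      · have : i = ⟨m+1, hj⟩ := Fin.ext (le_antisymm hi h)
        rwa [this] at hk
  have hmono' : ∀ (i j : Fin (n+1)), i ≤ j → ∀ k, x i k = true → x j k = true := by
    intro i j hij k hk
    have := hmono j.val j.isLt i hij k hk
    rwa [Fin.eta] at this
  -- the sets T
  set T : Fin (n+1) → Finset (Fin n) := fun m => Finset.univ.filter (fun k => x m k = true) with hT
  have hmemT : ∀ m k, k ∈ T m ↔ x m k = true := by
    intro m k; simp [hT]
  have hTsub : ∀ i j : Fin (n+1), i ≤ j → T i ⊆ T j := by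
    intro i j hij k hk
    rw [hmemT] at hk ⊢
    exact hmono' i j hij k hk
  have hTne : ∀ i : Fin n, T i.castSucc ≠ T i.succ := by
    intro i he
    apply (hstep i).2
    funext k
    have hbk : (x i.castSucc k = true) ↔ (x i.succ k = true) := by
      rw [← hmemT, ← hmemT, he]
    cases hc : x i.castSucc k <;> cases hs : x i.succ k <;> simp_all
  have hTss : ∀ i : Fin n, T i.castSucc ⊂ T i.succ := by
    intro i
    refine Finset.ssubset_iff_subset_ne.mpr ⟨hTsub _ _ ?_, hTne i⟩
    exact le_of_lt (show i.castSucc < i.succ from Fin.castSucc_lt_succ)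
  -- cardinality lower bound
  have hlow : ∀ (j : ℕ) (hj : j < n+1), j ≤ (T ⟨j, hj⟩).card := by
    intro j
    induction j with
    | zero => intro hj; exact Nat.zero_le _
    | succ m ih =>
      intro hj
      have hm : m < n + 1 := Nat.lt_of_succ_lt hj
      have hmn : m < n := Nat.succ_lt_succ_iff.mp hj
      have hss := hTss ⟨m, hmn⟩
      have e1 : (⟨m, hmn⟩ : Fin n).castSucc = ⟨m, hm⟩ := rfl
      have e2 : (⟨m, hmn⟩ : Fin n).succ = ⟨m+1, hj⟩ := rfl
      rw [e1, e2] at hss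
      have hcl := Finset.card_lt_card hss
      have hih := ih hm
      omega
  -- cardinality upper bound
  have hup : ∀ (d a : ℕ) (h : a + d = n),
      (T ⟨a, Nat.lt_succ_of_le (h ▸ Nat.le_add_right a d)⟩).card + d ≤ n := by
    intro d
    induction d with
    | zero =>
      intro a h
      have hx : ∀ m : Fin (n+1), (T m).card ≤ n := by
        intro m
        calc (T m).card ≤ (Finset.univ : Finset (Fin n)).card := Finset.card_le_univ _
          _ = n := by simp
      simpa using hx _
    | succ m ih =>
      intro a h
      have hmn : a < n := by omega
      have hm1 : a + 1 + m = n := by omega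
      have hss := hTss ⟨a, hmn⟩
      have card_lt := Finset.card_lt_card hss
      have := ih (a+1) hm1
      have e1 : (⟨a, hmn⟩ : Fin n).castSucc = (⟨a, Nat.lt_succ_of_le (h ▸ Nat.le_add_right a (m+1))⟩ : Fin (n+1)) := rfl
      have e2 : (⟨a, hmn⟩ : Fin n).succ = (⟨a+1, Nat.lt_succ_of_le (hm1 ▸ Nat.le_add_right (a+1) m)⟩ : Fin (n+1)) := rfl
      rw [e1, e2] at card_lt
      omega
  have hcard : ∀ m : Fin (n+1), (T m).card = m.val := by
    intro m
    have hle : m.val ≤ n := Nat.lt_succ_iff.mp m.isLt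
    have h1' := hlow m.val m.isLt
    have h2' := hup (n - m.val) m.val (by omega)
    rw [Fin.eta] at h1' h2'
    omega
  -- the singleton increments
  have hsing : ∀ i : Fin n, (T i.succ \ T i.castSucc).card = 1 := by
    intro i
    rw [Finset.card_sdiff_of_subset (hTsub _ _ (le_of_lt (show i.castSucc < i.succ from Fin.castSucc_lt_succ)))]
    rw [hcard, hcard, Fin.val_succ, Fin.coe_castSucc]
    omega
  have hsing' : ∀ i : Fin n, ∃ a, T i.succ \ T i.castSucc = {a} :=
    fun i => Finset.card_eq_one.mp (hsing i)
  choose π hπ using hsing'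
  have hπ_mem : ∀ i : Fin n, π i ∈ T i.succ ∧ π i ∉ T i.castSucc := by
    intro i
    have : π i ∈ T i.succ \ T i.castSucc := by rw [hπ i]; exact Finset.mem_singleton_self _
    exact ⟨(Finset.mem_sdiff.mp this).1, (Finset.mem_sdiff.mp this).2⟩
  -- key values
  have hu1 : ∀ i j : Fin n, j ≤ i → x i.succ (π j) = true := by
    intro i j hji
    have : π j ∈ T i.succ := hTsub j.succ i.succ (Fin.succ_le_succ_iff.mpr hji) (hπ_mem j).1
    exact (hmemT _ _).mp this
  have hu0 : ∀ i j : Fin n, i < j → x i.succ (π j) = false := by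
    intro i j hij
    have hsub : T i.succ ⊆ T j.castSucc := by
      apply hTsub
      rw [Fin.le_def, Fin.val_succ, Fin.coe_castSucc]
      exact hij
    have : π j ∉ T i.succ := fun hmem => (hπ_mem j).2 (hsub hmem)
    rw [hmemT] at this
    exact Bool.not_eq_true _ |>.mp this
  -- injectivity/surjectivity of π
  have hπinj : Function.Injective π := by
    intro i j hij
    by_contra hne
    have key : ∀ a b : Fin n, a < b → π a ≠ π b := by
      intro a b hab he
      have h1' := hu1 a a le_rfl
      have h0' := hu0 a b hab
      rw [← he] at h0'
      rw [h1'] at h0'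
      exact absurd h0' (by simp)
    rcases lt_or_gt_of_ne hne with h | h
    · exact key i j h hij
    · exact key j i h hij.symm
  have hπsurj : Function.Surjective π := (Finite.injective_iff_bijective.mp hπinj).2
  -- the u vectors
  set u : Fin n → Fin n → ZMod 2 := fun i => b2z (x i.succ) with hu
  have hu1' : ∀ i j : Fin n, j ≤ i → u i (π j) = 1 := by
    intro i j hji; simp only [hu, b2z, hu1 i j hji, if_true]
  have hu0' : ∀ i j : Fin n, i < j → u i (π j) = 0 := by
    intro i j hij; simp only [hu, b2z, hu0 i j hij]; simp
  -- the linear map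
  set L : (Fin n → ZMod 2) →ₗ[ZMod 2] (Fin n → ZMod 2) :=
    { toFun := fun c k => ∑ i, c i * u i k
      map_add' := by
        intro a b; funext k
        simp [add_mul, Finset.sum_add_distrib]
      map_smul' := by
        intro r a; funext k
        simp [Finset.mul_sum, mul_assoc] } with hL
  have hLapply : ∀ c k, L c k = ∑ i, c i * u i k := fun c k => rfl
  -- injectivity of L
  have hinj : Function.Injective L := by
    rw [← LinearMap.ker_eq_bot, LinearMap.ker_eq_bot']
    intro c hc
    have hc' : ∀ k, ∑ i, c i * u i k = 0 := by
      intro k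
      have := congrFun hc k
      rwa [hLapply] at this
    have hS0 : ∀ m : ℕ, (∑ i ∈ Finset.univ.filter (fun i : Fin n => m ≤ i.val), c i) = 0 := by
      intro m
      rcases Nat.lt_or_ge m n with hm | hm
      · have hck := hc' (π ⟨m, hm⟩)
        rw [← hck, Finset.sum_filter]
        apply Finset.sum_congr rfl
        intro i _
        rcases Nat.lt_or_ge i.val m with h | h
        · rw [hu0' i ⟨m, hm⟩ h]
          rw [if_neg (by omega)]
          ring
        · rw [hu1' i ⟨m, hm⟩ h]
          rw [if_pos h]
          ring
      · have he : Finset.univ.filter (fun i : Fin n => m ≤ i.val) = ∅ := by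
          apply Finset.filter_false_of_mem
          intro i _
          omega
        rw [he, Finset.sum_empty]
    funext j
    have hins : Finset.univ.filter (fun i : Fin n => j.val ≤ i.val)
        = insert j (Finset.univ.filter (fun i : Fin n => j.val + 1 ≤ i.val)) := by
      ext i
      simp only [Finset.mem_filter, Finset.mem_univ, true_and, Finset.mem_insert]
      constructor
      · intro h
        rcases Nat.eq_or_lt_of_le h with h' | h'
        · left; exact Fin.ext h'.symm
        · right; omega
      · rintro (rfl | h) <;> omega
    have hnot : j ∉ Finset.univ.filter (fun i : Fin n => j.val + 1 ≤ i.val) := by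
      simp only [Finset.mem_filter, Finset.mem_univ, true_and]
      omega
    have hSj := hS0 j.val
    rw [hins, Finset.sum_insert hnot, hS0 (j.val + 1)] at hSj
    simpa using hSj
  have hsurj : Function.Surjective L := LinearMap.injective_iff_surjective.mp hinj
  refine ⟨LinearEquiv.ofBijective L ⟨hinj, hsurj⟩, ?_, ?_⟩
  · have hb0 : b2z (fun _ => false) = (0 : Fin n → ZMod 2) := by
      funext k; simp [b2z]
    show z2b (L (b2z fun _ => false)) = x 0
    rw [hb0, map_zero]
    rw [h0]
    funext k
    simp [z2b]
  · intro i
    show z2b (L (b2z (eI i))) = x i.succ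
    have : L (b2z (eI i)) = b2z (x i.succ) := by
      funext k
      rw [hLapply]
      have : ∀ j : Fin n, b2z (eI i) j = if j = i then 1 else 0 := by
        intro j; simp [b2z, eI]
      calc ∑ j, b2z (eI i) j * u j k = ∑ j, if j = i then u j k else 0 := by
            apply Finset.sum_congr rfl
            intro j _
            rw [this j]
            split <;> ring
        _ = u i k := by rw [Finset.sum_ite_eq' Finset.univ i (fun j => u j k)]; simp
    rw [this, z2b_b2z]


/-- for every Boolean `f` there is an invertible `F_2`-linear map `L` such that
`g = f ∘ L` satisfies `alt(f) ≤ 2·s(g) + 1`, witnessed already at the all-zero input: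
`alt(f) ≤ 2·s(g, 0^n) + 1`. -/
theorem stmt1 (n : ℕ) (f : (Fin n → Bool) → Bool) :
    ∃ L : (Fin n → ZMod 2) ≃ₗ[ZMod 2] (Fin n → ZMod 2),
      altF f ≤ 2 * sensAt (fun x => f (z2b (L (b2z x)))) (fun _ => false) + 1 ∧
      altF f ≤ 2 * sens (fun x => f (z2b (L (b2z x)))) + 1 := by
  classical
  set F : (Fin (n+1) → Fin n → Bool) → ℕ :=
    fun x => if IsChainOn x then altChain f x else 0 with hF
  have haltF : altF f = Finset.univ.sup F := rfl
  obtain ⟨x, -, hxeq⟩ := Finset.exists_mem_eq_sup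
    (Finset.univ : Finset (Fin (n+1) → Fin n → Bool)) ⟨default, Finset.mem_univ _⟩ F
  by_cases hc : IsChainOn x
  · have hval : altF f = altChain f x := by
      rw [haltF, hxeq, hF]
      simp only [if_pos hc]
    obtain ⟨L, hL0, hLi⟩ := chain_equiv n x hc
    have hsens : sensAt (fun y => f (z2b (L (b2z y)))) (fun _ => false)
        = (Finset.univ.filter fun i : Fin n => f (x i.succ) ≠ f (x 0)).card := by
      unfold sensAt
      congr 1
      apply Finset.filter_congr
      intro i _
      have hb : bxor (fun _ => false) (eI i) = eI i := by
        funext j; simp [bxor]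
      rw [hb]
      show (f (z2b (L (b2z (eI i)))) ≠ f (z2b (L (b2z (fun _ => false))))) ↔ _
      rw [hLi i, hL0]
    have hmain : altF f ≤ 2 * sensAt (fun y => f (z2b (L (b2z y)))) (fun _ => false) + 1 := by
      rw [hval, hsens]
      exact (altChain_le n f x).trans (Nat.le_succ _)
    refine ⟨L, hmain, ?_⟩
    have hle : sensAt (fun y => f (z2b (L (b2z y)))) (fun _ => false)
        ≤ sens (fun y => f (z2b (L (b2z y)))) :=
      Finset.le_sup (Finset.mem_univ _)
    omega
  · have hval : altF f = 0 := by
      rw [haltF, hxeq, hF]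
      simp only [if_neg hc]
    exact ⟨LinearEquiv.refl _ _, by rw [hval]; exact Nat.zero_le _,
      by rw [hval]; exact Nat.zero_le _⟩
end

section
/- Let f_1, …, f_k : {0,1}^n → {0,1} satisfy f_i(0^n) = f_i(1^n) = 0 for all i ∈ [k], and define F : {0,1}^{nk} → {0,1} on variable-disjoint inputs by F(x^{(1)}, …, x^{(k)}) = ⋁_{i=1}^k f_i(x^{(i)}). Then alt(F) = Σ_{i=1}^k alt(f_i). -/
open scoped Classical

theorem mulIdx_lt {k n : ℕ} (i : Fin k) (j : Fin n) : i.1 * n + j.1 < k * n := by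
  calc i.1 * n + j.1 < i.1 * n + n := Nat.add_lt_add_left j.isLt _
    _ = (i.1 + 1) * n := by ring
    _ ≤ k * n := Nat.mul_le_mul_right n i.isLt

/-!
Along a chain of `{0,1}^{nk}` each step flips one coordinate, so `F` can only change value
when the `f_i` of the block containing that coordinate does. Restricted to block `i`, the chain
is a monotone path flipping at most one coordinate per step; its points of Hamming weight
`0, 1, …, n` form a chain of `{0,1}^n` that sees every change of `f_i` along the path. Hence
`alt(F) ≤ Σ alt(f_i)`, for any way of combining the values `f_i(x^{(i)})`.

Conversely, run optimal chains for `f_1, …, f_k` one block after another. While block `i` is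
being filled, the earlier blocks are `1^n` and the later ones `0^n`, where every `f_b` vanishes,
so `F` agrees with `f_i` and the alternations add up.
-/

open Finset

section HammingWeight

variable {n : ℕ}

def hammingWeight (x : Fin n → Bool) : ℕ := #{j | x j = true}

lemma hammingWeight_le (x : Fin n → Bool) : hammingWeight x ≤ n :=
  (card_filter_le _ _).trans_eq (card_fin n)

lemma hammingWeight_strictMono : StrictMono (hammingWeight : (Fin n → Bool) → ℕ) := by
  intro x y hxy
  obtain ⟨hle, j, hj⟩ := Pi.lt_def.1 hxy
  refine card_lt_card ((ssubset_iff_of_subset fun j => ?_).2 ⟨j, ?_⟩)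
  · simpa using Bool.le_iff_imp.1 (hle j)
  · simpa using (Bool.lt_iff.1 hj).symm

lemma hammingWeight_false : hammingWeight (fun _ : Fin n => false) = 0 := by simp [hammingWeight]

lemma hammingWeight_true : hammingWeight (fun _ : Fin n => true) = n := by simp [hammingWeight]

variable {α : Type*} [LinearOrder α] {y : α → Fin n → Bool} {a b : α}

lemma Monotone.eq_of_hammingWeight_eq (hy : Monotone y)
    (h : hammingWeight (y a) = hammingWeight (y b)) : y a = y b := by
  rcases le_total a b with hab | hab
  · exact (hy hab).eq_of_not_lt fun hlt => (hammingWeight_strictMono hlt).ne h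
  · exact ((hy hab).eq_of_not_lt fun hlt => (hammingWeight_strictMono hlt).ne h.symm).symm

lemma Monotone.le_of_hammingWeight_lt (hy : Monotone y)
    (h : hammingWeight (y a) < hammingWeight (y b)) : y a ≤ y b := by
  rcases le_total a b with hab | hab
  · exact hy hab
  · exact absurd (hammingWeight_strictMono.monotone (hy hab)) h.not_ge

end HammingWeight

lemma Fin.exists_apply_eq_of_succ_le_add_one {N s : ℕ} (g : Fin (N + 1) → ℕ)
    (hstep : ∀ t : Fin N, g t.succ ≤ g t.castSucc + 1) (h0 : g 0 ≤ s)
    (hN : s ≤ g (Fin.last N)) :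
    ∃ t, g t = s := by
  obtain ⟨t, ht, hmin⟩ :=
    (univ.filter fun t => s ≤ g t).exists_min_image id ⟨_, by simpa using hN⟩
  refine ⟨t, le_antisymm ?_ (by simpa using ht)⟩
  induction t using Fin.cases with
  | zero => exact h0
  | succ t =>
    have hprev : g t.castSucc < s := by
      by_contra! h
      exact (hmin t.castSucc (by simpa using h)).not_gt Fin.castSucc_lt_succ
    linarith [hstep t]

section Chain

variable {n : ℕ} {x : Fin (n + 1) → Fin n → Bool}

lemma IsChainOn.strictMono (hx : IsChainOn x) : StrictMono x :=
  Fin.strictMono_iff_lt_succ.2 fun t => lt_of_le_of_ne (hx.2.2 t).1 (hx.2.2 t).2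

lemma IsChainOn.hammingWeight_eq (hx : IsChainOn x) (t : Fin (n + 1)) :
    hammingWeight (x t) = t := by
  let w : Fin (n + 1) → Fin (n + 1) :=
    fun t => ⟨hammingWeight (x t), Nat.lt_succ_of_le (hammingWeight_le _)⟩
  have hw : StrictMono w := fun a b hab => hammingWeight_strictMono (hx.strictMono hab)
  exact congrArg Fin.val (le_antisymm hw.apply_le hw.le_apply)

lemma IsChainOn.flips_subsingleton (hx : IsChainOn x) (t : Fin n) :
    {j | x t.castSucc j ≠ x t.succ j}.Subsingleton := by
  intro j hj j' hj'
  by_contra hne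
  have hstep := (hx.2.2 t).1
  have hflip :
      ∀ i, x t.castSucc i ≠ x t.succ i → x t.castSucc i = false ∧ x t.succ i = true :=
    fun i hi => Bool.lt_iff.1 (lt_of_le_of_ne (hstep i) hi)
  obtain ⟨hj0, hj1⟩ := hflip j hj
  obtain ⟨hj0', hj1'⟩ := hflip j' hj'
  have hsub : insert j (insert j' ({i | x t.castSucc i = true} : Finset (Fin n))) ⊆
      ({i | x t.succ i = true} : Finset (Fin n)) := by
    intro i hi
    simp only [mem_insert, mem_filter, mem_univ, true_and] at hi ⊢
    rcases hi with rfl | rfl | hi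
    exacts [hj1, hj1', Bool.le_iff_imp.1 (hstep i) hi]
  have hcard := card_le_card hsub
  rw [card_insert_of_notMem (by simp [hne, hj0]), card_insert_of_notMem (by simp [hj0'])] at hcard
  have h0 := hx.hammingWeight_eq t.castSucc
  have h1 := hx.hammingWeight_eq t.succ
  simp only [hammingWeight, Fin.val_castSucc, Fin.val_succ] at h0 h1
  omega

lemma exists_isChainOn (n : ℕ) : ∃ x : Fin (n + 1) → Fin n → Bool, IsChainOn x := by
  refine ⟨fun t j => decide (j.val < t.val), by simp, by simp,
    fun t => ⟨fun j => ?_, fun h => ?_⟩⟩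
  · simp only [Fin.val_castSucc, Fin.val_succ, Bool.le_iff_imp, decide_eq_true_eq]; omega
  · simpa using congrFun h t

lemma altChain_le_altF {f : (Fin n → Bool) → Bool} (hx : IsChainOn x) :
    altChain f x ≤ altF f := by
  simpa [hx, altF] using le_sup (f := fun x => if IsChainOn x then altChain f x else 0) (mem_univ x)

lemma exists_isChainOn_altChain_eq_altF (f : (Fin n → Bool) → Bool) :
    ∃ x, IsChainOn x ∧ altChain f x = altF f := by
  obtain ⟨x₀, hx₀⟩ := exists_isChainOn n
  obtain ⟨x, hx, hmax⟩ := (univ.filter IsChainOn).exists_max_image (altChain f)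
    ⟨x₀, mem_filter.2 ⟨mem_univ _, hx₀⟩⟩
  rw [mem_filter] at hx
  refine ⟨x, hx.2, le_antisymm (altChain_le_altF hx.2) (Finset.sup_le fun y _ => ?_)⟩
  split_ifs with hy
  exacts [hmax y (mem_filter.2 ⟨mem_univ _, hy⟩), Nat.zero_le _]

end Chain

theorem card_filter_ne_le_altF {n N : ℕ} (f : (Fin n → Bool) → Bool)
    {y : Fin (N + 1) → Fin n → Bool}
    (hy : Monotone y) (h0 : y 0 = fun _ => false) (hN : y (Fin.last N) = fun _ => true)
    (hflip : ∀ t : Fin N, {j | y t.castSucc j ≠ y t.succ j}.Subsingleton) :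
    #{t : Fin N | f (y t.succ) ≠ f (y t.castSucc)} ≤ altF f := by
  have hstep : ∀ t : Fin N, hammingWeight (y t.succ) ≤ hammingWeight (y t.castSucc) + 1 := by
    intro t
    have hsub : ({j | y t.succ j = true} : Finset (Fin n)) ⊆
        ({j | y t.castSucc j = true} : Finset (Fin n)) ∪
          ({j | y t.castSucc j ≠ y t.succ j} : Finset (Fin n)) := by
      intro j hj
      by_cases h : y t.castSucc j = true <;> simp_all
    have hone : #({j | y t.castSucc j ≠ y t.succ j} : Finset (Fin n)) ≤ 1 :=
      card_le_one.2 fun j hj j' hj' => hflip t (by simpa using hj) (by simpa using hj')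
    exact (card_le_card hsub).trans ((card_union_le _ _).trans (Nat.add_le_add_left hone _))
  have hhit (s : Fin (n + 1)) : ∃ t, hammingWeight (y t) = s :=
    Fin.exists_apply_eq_of_succ_le_add_one (hammingWeight ∘ y) hstep
      (by simp [h0, hammingWeight_false])
      (by simpa [hN, hammingWeight_true] using Nat.le_of_lt_succ s.isLt)
  choose τ hτ using hhit
  -- `y ∘ τ` visits the point of `y` of each Hamming weight `0, 1, …, n`
  have hc : IsChainOn (y ∘ τ) := by
    refine ⟨(hy.eq_of_hammingWeight_eq (b := 0)
        (by simp [hτ, h0, hammingWeight_false])).trans h0,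
      (hy.eq_of_hammingWeight_eq (b := Fin.last N)
        (by simp [hτ, hN, hammingWeight_true])).trans hN,
      fun s => ⟨?_, ?_⟩⟩
    · exact hy.le_of_hammingWeight_lt (by simp [hτ])
    · exact fun h => by simpa [hτ] using congrArg hammingWeight h
  have hup (t : Fin N) (ht : f (y t.succ) ≠ f (y t.castSucc)) :
      hammingWeight (y t.castSucc) < hammingWeight (y t.succ) :=
    hammingWeight_strictMono (lt_of_le_of_ne (hy (Fin.castSucc_le_succ t)) fun h => ht (by rw [h]))
  calc #{t : Fin N | f (y t.succ) ≠ f (y t.castSucc)}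
      ≤ #(({s | f (y (τ s.succ)) ≠ f (y (τ s.castSucc))} : Finset (Fin n)).map
          Fin.valEmbedding) := by
        refine card_le_card_of_injOn (fun t => hammingWeight (y t.castSucc)) (fun t ht => ?_) ?_
        · have ht : f (y t.succ) ≠ f (y t.castSucc) := by simpa using ht
          have hsucc : hammingWeight (y t.succ) = hammingWeight (y t.castSucc) + 1 :=
            le_antisymm (hstep t) (hup t ht)
          have hlt : hammingWeight (y t.castSucc) < n := by
            have := hammingWeight_le (y t.succ); omega
          refine mem_map.2 ⟨⟨_, hlt⟩, mem_filter.2 ⟨mem_univ _, ?_⟩, rfl⟩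
          rwa [hy.eq_of_hammingWeight_eq (a := τ _) (b := t.succ) (by simp [hτ, hsucc]),
            hy.eq_of_hammingWeight_eq (a := τ _) (b := t.castSucc) (by simp [hτ])]
        · refine StrictMonoOn.injOn fun t₁ ht₁ t₂ _ h =>
            (hup t₁ (by simpa using ht₁)).trans_le ?_
          exact hammingWeight_strictMono.monotone (hy (Fin.succ_le_castSucc_iff.2 h))
    _ ≤ altF f := by rw [card_map]; exact altChain_le_altF hc

section Blocks

variable {k n : ℕ}

def blockIdx (i : Fin k) (j : Fin n) : Fin (k * n) := ⟨i * n + j, mulIdx_lt i j⟩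

def block (y : Fin (k * n) → Bool) (i : Fin k) : Fin n → Bool := fun j => y (blockIdx i j)

lemma finProdFinEquiv_apply_eq_blockIdx (i : Fin k) (j : Fin n) :
    finProdFinEquiv (i, j) = blockIdx i j :=
  Fin.ext (by simp [blockIdx, mul_comm, add_comm])

lemma blockIdx_injective (i : Fin k) : Function.Injective (blockIdx (n := n) i) :=
  fun j j' h => Fin.ext (by simpa [blockIdx] using congrArg Fin.val h)

theorem altF_le_sum_altF_of_blocks (g : (Fin k → Bool) → Bool)
    (f : Fin k → (Fin n → Bool) → Bool) :
    altF (fun y => g fun i => f i (block y i)) ≤ ∑ i, altF (f i) := by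
  refine Finset.sup_le fun C _ => ?_
  split_ifs with hC
  · have hsub : ({t | g (fun i => f i (block (C t.succ) i)) ≠
          g (fun i => f i (block (C t.castSucc) i))} : Finset (Fin (k * n))) ⊆
        univ.biUnion fun i => {t | f i (block (C t.succ) i) ≠ f i (block (C t.castSucc) i)} := by
      intro t ht
      simp only [mem_filter, mem_univ, true_and, mem_biUnion] at ht ⊢
      by_contra! h
      exact ht (congrArg g (funext h))
    refine (card_le_card hsub).trans (card_biUnion_le.trans (sum_le_sum fun i _ => ?_))
    refine card_filter_ne_le_altF (f i) (y := fun t => block (C t) i)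
      (fun a b hab j => hC.strictMono.monotone hab _) ?_ ?_
      fun t => (hC.flips_subsingleton t).preimage (f := blockIdx i) (blockIdx_injective i)
    · funext j; simp [block, hC.1]
    · funext j; simp [block, hC.2.1]
  · exact Nat.zero_le _

end Blocks

section Concat

variable {k n : ℕ}

/-- Block `i` sits at `0` until time `i * n` (truncated subtraction), then follows its chain,
then stays at `n`. -/
def localTime (n i t : ℕ) : Fin (n + 1) := ⟨min (t - i * n) n, by omega⟩

def concatChain (c : Fin k → Fin (n + 1) → Fin n → Bool) (t : Fin (k * n + 1))
    (p : Fin (k * n)) : Bool :=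
  c (finProdFinEquiv.symm p).1 (localTime n (finProdFinEquiv.symm p).1 t) (finProdFinEquiv.symm p).2

lemma blockIdx_surjective : Function.Surjective fun q : Fin k × Fin n => blockIdx q.1 q.2 := by
  simpa [← finProdFinEquiv_apply_eq_blockIdx] using finProdFinEquiv.surjective

lemma concatChain_blockIdx (c : Fin k → Fin (n + 1) → Fin n → Bool) (t : Fin (k * n + 1))
    (i : Fin k) (j : Fin n) : concatChain c t (blockIdx i j) = c i (localTime n i t) j := by
  simp [concatChain, ← finProdFinEquiv_apply_eq_blockIdx]

lemma block_concatChain (c : Fin k → Fin (n + 1) → Fin n → Bool) (t : Fin (k * n + 1))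
    (i : Fin k) : block (concatChain c t) i = c i (localTime n i t) :=
  funext (concatChain_blockIdx c t i)

lemma IsChainOn.apply_localTime_of_le {x : Fin (n + 1) → Fin n → Bool} (hx : IsChainOn x)
    {i t : ℕ} (h : t ≤ i * n) : x (localTime n i t) = fun _ => false := by
  rw [← hx.1]; congr; ext; simp [localTime]; omega

lemma IsChainOn.apply_localTime_of_ge {x : Fin (n + 1) → Fin n → Bool} (hx : IsChainOn x)
    {i t : ℕ} (h : (i + 1) * n ≤ t) : x (localTime n i t) = fun _ => true := by
  rw [← hx.2.1]; congr; ext; simp [localTime, Nat.succ_mul] at h ⊢; omega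

lemma localTime_eq {i t : ℕ} {s : Fin (n + 1)} (h : t = i * n + s) : localTime n i t = s := by
  ext; simp [localTime]; omega

theorem isChainOn_concatChain {c : Fin k → Fin (n + 1) → Fin n → Bool}
    (hc : ∀ i, IsChainOn (c i)) : IsChainOn (concatChain c) := by
  refine ⟨funext fun p => ?_, funext fun p => ?_, fun t => ⟨fun p => ?_, fun h => ?_⟩⟩
  all_goals try obtain ⟨⟨i, j⟩, rfl⟩ := blockIdx_surjective p
  · rw [concatChain_blockIdx, (hc i).apply_localTime_of_le (by simp)]
  · rw [concatChain_blockIdx,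
      (hc i).apply_localTime_of_ge (by simpa using Nat.mul_le_mul_right n i.isLt)]
  · rw [concatChain_blockIdx, concatChain_blockIdx]
    exact (hc i).strictMono.monotone (by simp [Fin.le_def, localTime]; omega) j
  · obtain ⟨⟨i, s⟩, rfl⟩ := blockIdx_surjective t
    apply ((hc i).2.2 s).2
    have := congrArg (block · i) h
    rwa [block_concatChain, block_concatChain, localTime_eq (s := s.castSucc) (by simp [blockIdx]),
      localTime_eq (s := s.succ) (by simp [blockIdx]; ring)] at this

end Concat

section OrComposition

variable {k n : ℕ} {f : Fin k → (Fin n → Bool) → Bool}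
  {c : Fin k → Fin (n + 1) → Fin n → Bool}

lemma or_blocks_concatChain (h0 : ∀ i, f i (fun _ => false) = false)
    (h1 : ∀ i, f i (fun _ => true) = false) (hc : ∀ i, IsChainOn (c i)) {i : Fin k}
    {s : Fin (n + 1)} {t : Fin (k * n + 1)} (ht : (t : ℕ) = i * n + s) :
    decide (∃ b, f b (block (concatChain c t) b) = true) = f i (c i s) := by
  have hb (b : Fin k) :
      f b (block (concatChain c t) b) = if b = i then f i (c i s) else false := by
    rw [block_concatChain]
    rcases lt_trichotomy b i with h | rfl | h
    · have := Nat.mul_le_mul_right n (Fin.lt_def.1 h)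
      rw [(hc b).apply_localTime_of_ge (by rw [Nat.succ_mul] at *; omega), h1, if_neg h.ne]
    · rw [localTime_eq ht, if_pos rfl]
    · have := Nat.mul_le_mul_right n (Fin.lt_def.1 h)
      rw [(hc b).apply_localTime_of_le (by rw [Nat.succ_mul] at *; omega), h0, if_neg h.ne']
  simp [hb]

theorem altChain_or_concatChain (h0 : ∀ i, f i (fun _ => false) = false)
    (h1 : ∀ i, f i (fun _ => true) = false) (hc : ∀ i, IsChainOn (c i)) :
    altChain (fun y => decide (∃ i, f i (block y i) = true)) (concatChain c) =
      ∑ i, altChain (f i) (c i) := by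
  simp only [altChain, card_filter]
  rw [← finProdFinEquiv.sum_comp, Fintype.sum_prod_type]
  refine sum_congr rfl fun i _ => sum_congr rfl fun s _ => ?_
  rw [finProdFinEquiv_apply_eq_blockIdx,
    or_blocks_concatChain h0 h1 hc (i := i) (s := s.succ) (by simp [blockIdx]; ring),
    or_blocks_concatChain h0 h1 hc (i := i) (s := s.castSucc) (by simp [blockIdx])]

theorem sum_altF_le_altF_or (h0 : ∀ i, f i (fun _ => false) = false)
    (h1 : ∀ i, f i (fun _ => true) = false) :
    ∑ i, altF (f i) ≤ altF (fun y => decide (∃ i, f i (block y i) = true)) := by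
  choose c hc hcalt using fun i => exists_isChainOn_altChain_eq_altF (f i)
  calc ∑ i, altF (f i) = ∑ i, altChain (f i) (c i) := by simp only [hcalt]
    _ = altChain _ (concatChain c) := (altChain_or_concatChain h0 h1 hc).symm
    _ ≤ _ := altChain_le_altF (isChainOn_concatChain hc)

end OrComposition

/-- if `f_1, …, f_k` all vanish on `0^n` and `1^n`, then the variable-disjoint
OR-composition `F(x^{(1)}, …, x^{(k)}) = ⋁_i f_i(x^{(i)})` on `{0,1}^{nk}` has alternation
exactly `Σ_i alt(f_i)`. -/
theorem stmt3 (n k : ℕ) (f : Fin k → (Fin n → Bool) → Bool)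
    (h0 : ∀ i, f i (fun _ => false) = false) (h1 : ∀ i, f i (fun _ => true) = false) :
    altF (fun y : Fin (k * n) → Bool =>
        decide (∃ i : Fin k, f i (fun j : Fin n => y ⟨i.1 * n + j.1, mulIdx_lt i j⟩) = true))
      = ∑ i : Fin k, altF (f i) :=
  le_antisymm (altF_le_sum_altF_of_blocks (fun v => decide (∃ i, v i = true)) f)
    (sum_altF_le_altF_or h0 h1)
end

section
/- For every k ≥ 2 and every shift c ∈ {0,1}^{2^k − 1}, the shifted function x ↦ f_k(x ⊕ c) satisfies alt(x ↦ f_k(x ⊕ c)) ≥ 2^{k−2}. -/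
open scoped Classical

/-- The recursively defined decision-tree function family: `fTree 1 = id` on one bit, and
`fTree (k+1) (b, z, z') = fTree k z` if `b = 0`, `fTree k z'` if `b = 1`
(layout: bit 0 is `b`, bits `1..2^k-1` are `z`, bits `2^k..2^(k+1)-2` are `z'`). -/
def fTree : (k : ℕ) → (Fin (2 ^ k - 1) → Bool) → Bool
  | 0, _ => false
  | 1, x => x ⟨0, by norm_num⟩
  | (k + 2), x =>
    if x ⟨0, by have h : (1:ℕ) < 2 ^ (k + 2) := Nat.one_lt_two_pow_iff.mpr (by omega); omega⟩ then
      fTree (k + 1) (fun j => x ⟨j.1 + 2 ^ (k + 1), by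
        have hj := j.isLt
        have h1 : 0 < 2 ^ (k + 1) := by positivity
        have h2 : 2 ^ (k + 2) = 2 ^ (k + 1) * 2 := pow_succ 2 (k + 1)
        omega⟩)
    else
      fTree (k + 1) (fun j => x ⟨j.1 + 1, by
        have hj := j.isLt
        have h1 : 0 < 2 ^ (k + 1) := by positivity
        have h2 : 2 ^ (k + 2) = 2 ^ (k + 1) * 2 := pow_succ 2 (k + 1)
        omega⟩)

/-!
By induction on `k` one gets even `2 ^ (k - 1)` alternations. Take good chains for the two subtrees
of `f_(k+1)(· ⊕ c)`. Keeping the root at `0`, first run through the subtree that the shifted root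
bit `c₀` selects, then flip the root, which switches the tree over to the other subtree, still at
its starting point, and run through that one. The alternations of both subtree chains survive, so
the count doubles; for `k = 1` every chain alternates once.
-/

open Finset

/-- A chain encoded by flip times: coordinate `j` is flipped at step `τ j`. It is a chain of the
`n`-cube when `τ` permutes `{0, …, n - 1}`. -/
def flipChain {n : ℕ} (τ : ℕ → ℕ) (t : ℕ) : Fin n → Bool := fun j => decide (τ j < t)

def switchCount (u : ℕ → Bool) (n : ℕ) : ℕ := #{i ∈ range n | u (i + 1) ≠ u i}

lemma switchCount_eq_sum (u : ℕ → Bool) (n : ℕ) :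
    switchCount u n = ∑ i ∈ range n, if u (i + 1) ≠ u i then 1 else 0 :=
  card_filter _ _

lemma switchCount_add (u : ℕ → Bool) (a b : ℕ) :
    switchCount u (a + b) = switchCount u a + switchCount (fun s => u (a + s)) b := by
  simp only [switchCount_eq_sum, sum_range_add, add_assoc]

lemma switchCount_le_succ (u : ℕ → Bool) (n : ℕ) : switchCount u n ≤ switchCount u (n + 1) := by
  rw [switchCount_add]; exact Nat.le_add_right _ _

lemma switchCount_congr {u v : ℕ → Bool} {n : ℕ} (h : ∀ t ≤ n, u t = v t) :
    switchCount u n = switchCount v n := by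
  simp only [switchCount_eq_sum]
  refine sum_congr rfl fun i hi => ?_
  rw [mem_range] at hi
  rw [h i hi.le, h (i + 1) hi]

section flipChain

variable {n : ℕ} {τ : ℕ → ℕ}

lemma isChainOn_flipChain (hmaps : Set.MapsTo τ (Set.Iio n) (Set.Iio n))
    (hsurj : Set.SurjOn τ (Set.Iio n) (Set.Iio n)) :
    IsChainOn fun t : Fin (n + 1) => (flipChain τ t : Fin n → Bool) := by
  refine ⟨?_, ?_, fun i => ⟨fun j => ?_, fun h => ?_⟩⟩
  · funext j; simp [flipChain]
  · funext j; simpa [flipChain] using hmaps j.2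
  · simp only [flipChain, Fin.val_castSucc, Fin.val_succ, Bool.le_iff_imp, decide_eq_true_eq]
    omega
  · obtain ⟨j, hj, hτj⟩ := hsurj i.2
    have := congrFun h ⟨j, hj⟩
    simp [flipChain, hτj] at this

lemma altChain_flipChain (f : (Fin n → Bool) → Bool) :
    altChain f (fun t : Fin (n + 1) => flipChain τ t) = switchCount (fun t => f (flipChain τ t)) n := by
  rw [altChain, switchCount_eq_sum, card_filter, ← Fin.sum_univ_eq_sum_range]
  rfl

lemma switchCount_le_altF (f : (Fin n → Bool) → Bool)
    (hmaps : Set.MapsTo τ (Set.Iio n) (Set.Iio n)) (hsurj : Set.SurjOn τ (Set.Iio n) (Set.Iio n)) :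
    switchCount (fun t => f (flipChain τ t)) n ≤ altF f := by
  rw [← altChain_flipChain]
  have := le_sup (f := fun x : Fin (n + 1) → Fin n → Bool =>
    if IsChainOn x then altChain f x else 0) (mem_univ fun t : Fin (n + 1) => flipChain τ t)
  rw [if_pos (isChainOn_flipChain hmaps hsurj)] at this
  exact this

end flipChain

lemma two_pow_succ_sub_one (k : ℕ) : 2 ^ (k + 1) - 1 = 2 * (2 ^ k - 1) + 1 := by
  have := Nat.one_le_two_pow (n := k)
  rw [pow_succ]; omega

/-- Position, among the `2 * m + 1` variables of a tree whose subtrees have `m` variables each, of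
variable `j` of subtree `s` (`false` is left, `true` is right); the root is variable `0`. -/
def childIndex (m : ℕ) (s : Bool) (j : ℕ) : ℕ := if s then j + m + 1 else j + 1

lemma childIndex_lt {m j : ℕ} (s : Bool) (hj : j < m) : childIndex m s j < 2 * m + 1 := by
  unfold childIndex; split <;> omega

def treeRoot (k : ℕ) : Fin (2 ^ (k + 1) - 1) := ⟨0, by rw [two_pow_succ_sub_one]; omega⟩

def subtree (k : ℕ) (s : Bool) (x : Fin (2 ^ (k + 1) - 1) → Bool) : Fin (2 ^ k - 1) → Bool :=
  fun j => x ⟨childIndex (2 ^ k - 1) s j, by rw [two_pow_succ_sub_one]; exact childIndex_lt s j.2⟩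

lemma fTree_succ {k : ℕ} (hk : 1 ≤ k) (x : Fin (2 ^ (k + 1) - 1) → Bool) :
    fTree (k + 1) x = fTree k (subtree k (x (treeRoot k)) x) := by
  obtain ⟨k, rfl⟩ : ∃ k', k = k' + 1 := ⟨k - 1, by omega⟩
  have := Nat.one_le_two_pow (n := k + 1)
  rw [fTree]
  cases hroot : x (treeRoot (k + 1)) <;> simp only [treeRoot] at hroot <;>
    simp only [hroot, Bool.false_eq_true, if_false, if_true] <;>
    refine congrArg _ (funext fun j => congrArg x (Fin.ext ?_))
  · rfl
  · simp only [childIndex, if_true]; omega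

/-- Flip times on a tree with subtrees of size `m` whose root starts by selecting subtree `b`:
first the variables of subtree `b` in the order `τA`, then the root, then the variables of the
other subtree in the order `τB`. -/
def glueTime (m : ℕ) (b : Bool) (τA τB : ℕ → ℕ) (i : ℕ) : ℕ :=
  if i = 0 then m
  else if i ≤ m then (if b then m + 1 + τB (i - 1) else τA (i - 1))
  else (if b then τA (i - m - 1) else m + 1 + τB (i - m - 1))

section glueTime

variable {m : ℕ} {b : Bool} {τA τB : ℕ → ℕ}

lemma glueTime_zero : glueTime m b τA τB 0 = m := rfl

lemma glueTime_childIndex_self {j : ℕ} (hj : j < m) :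
    glueTime m b τA τB (childIndex m b j) = τA j := by
  have : j + m + 1 - m - 1 = j := by omega
  cases b <;> simp [glueTime, childIndex, this, hj.not_ge]

lemma glueTime_childIndex_not {j : ℕ} (hj : j < m) :
    glueTime m b τA τB (childIndex m (!b) j) = m + 1 + τB j := by
  have : j + m + 1 - m - 1 = j := by omega
  cases b <;> simp [glueTime, childIndex, this, hj.not_ge]

lemma glueTime_mapsTo (hA : Set.MapsTo τA (Set.Iio m) (Set.Iio m))
    (hB : Set.MapsTo τB (Set.Iio m) (Set.Iio m)) :
    Set.MapsTo (glueTime m b τA τB) (Set.Iio (2 * m + 1)) (Set.Iio (2 * m + 1)) := by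
  intro i hi
  simp only [Set.mem_Iio] at hi ⊢
  have hA' := @hA (i - 1); have hA'' := @hA (i - m - 1)
  have hB' := @hB (i - 1); have hB'' := @hB (i - m - 1)
  simp only [Set.mem_Iio] at hA' hA'' hB' hB''
  unfold glueTime
  split_ifs <;> omega

lemma glueTime_surjOn (hA : Set.SurjOn τA (Set.Iio m) (Set.Iio m))
    (hB : Set.SurjOn τB (Set.Iio m) (Set.Iio m)) :
    Set.SurjOn (glueTime m b τA τB) (Set.Iio (2 * m + 1)) (Set.Iio (2 * m + 1)) := by
  intro t ht
  simp only [Set.mem_Iio] at ht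
  rcases lt_trichotomy t m with htm | rfl | htm
  · obtain ⟨j, hj, rfl⟩ := hA htm
    exact ⟨childIndex m b j, childIndex_lt b hj, glueTime_childIndex_self hj⟩
  · exact ⟨0, by simp, glueTime_zero⟩
  · obtain ⟨j, hj, hτj⟩ := hB (show t - m - 1 < m by omega)
    refine ⟨childIndex m (!b) j, childIndex_lt (!b) hj, ?_⟩
    rw [glueTime_childIndex_not hj, hτj]
    omega

end glueTime

section glueChain

variable {k : ℕ} (c : Fin (2 ^ (k + 1) - 1) → Bool) (τA τB : ℕ → ℕ)

lemma fTree_flipChain_glueTime_of_le (hk : 1 ≤ k) {t : ℕ} (ht : t ≤ 2 ^ k - 1) :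
    fTree (k + 1) (bxor (flipChain (glueTime (2 ^ k - 1) (c (treeRoot k)) τA τB) t) c) =
      fTree k (bxor (flipChain τA t) (subtree k (c (treeRoot k)) c)) := by
  have hroot : bxor (flipChain (glueTime (2 ^ k - 1) (c (treeRoot k)) τA τB) t) c (treeRoot k) =
      c (treeRoot k) := by
    show (decide (glueTime _ _ τA τB 0 < t) ^^ _) = _
    rw [glueTime_zero, decide_eq_false ht.not_gt, Bool.false_xor]
  rw [fTree_succ hk, hroot]
  congr 1
  funext j
  simp only [subtree, bxor, flipChain, glueTime_childIndex_self j.2]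

lemma fTree_flipChain_glueTime_add (hk : 1 ≤ k) (s : ℕ) :
    fTree (k + 1) (bxor (flipChain (glueTime (2 ^ k - 1) (c (treeRoot k)) τA τB)
        (2 ^ k - 1 + 1 + s)) c) =
      fTree k (bxor (flipChain τB s) (subtree k (!c (treeRoot k)) c)) := by
  have hroot : bxor (flipChain (glueTime (2 ^ k - 1) (c (treeRoot k)) τA τB)
      (2 ^ k - 1 + 1 + s)) c (treeRoot k) = !c (treeRoot k) := by
    show (decide (glueTime _ _ τA τB 0 < _) ^^ _) = _
    rw [glueTime_zero, decide_eq_true (by omega), Bool.true_xor]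
  rw [fTree_succ hk, hroot]
  congr 1
  funext j
  simp only [subtree, bxor, flipChain, glueTime_childIndex_not j.2, add_lt_add_iff_left]

lemma switchCount_glueTime (hk : 1 ≤ k) :
    switchCount (fun t => fTree k (bxor (flipChain τA t) (subtree k (c (treeRoot k)) c)))
        (2 ^ k - 1) +
      switchCount (fun t => fTree k (bxor (flipChain τB t) (subtree k (!c (treeRoot k)) c)))
        (2 ^ k - 1) ≤
    switchCount (fun t => fTree (k + 1)
      (bxor (flipChain (glueTime (2 ^ k - 1) (c (treeRoot k)) τA τB) t) c)) (2 ^ (k + 1) - 1) := by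
  have hn : 2 ^ k - 1 + 1 + (2 ^ k - 1) = 2 ^ (k + 1) - 1 := by rw [two_pow_succ_sub_one]; ring
  refine le_of_le_of_eq ?_ (congrArg _ hn)
  rw [switchCount_add]
  gcongr
  · rw [← switchCount_congr fun t ht => fTree_flipChain_glueTime_of_le c τA τB hk ht]
    exact switchCount_le_succ _ _
  · simp only [fTree_flipChain_glueTime_add c τA τB hk, le_refl]

end glueChain

lemma exists_flipTime_two_pow_le_switchCount {k : ℕ} (hk : 1 ≤ k) (c : Fin (2 ^ k - 1) → Bool) :
    ∃ τ : ℕ → ℕ, Set.MapsTo τ (Set.Iio (2 ^ k - 1)) (Set.Iio (2 ^ k - 1)) ∧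
      Set.SurjOn τ (Set.Iio (2 ^ k - 1)) (Set.Iio (2 ^ k - 1)) ∧
      2 ^ (k - 1) ≤ switchCount (fun t => fTree k (bxor (flipChain τ t) c)) (2 ^ k - 1) := by
  induction k, hk using Nat.le_induction with
  | base =>
    refine ⟨fun _ => 0, fun _ _ => by simp, fun t ht => ⟨0, by simp_all⟩, ?_⟩
    show 1 ≤ switchCount (fun t => fTree 1 (bxor (flipChain (fun _ => 0) t) c)) 1
    rw [switchCount_eq_sum, sum_range_one]
    simp [fTree, bxor, flipChain]
  | succ k hk ih =>
    set b := c (treeRoot k)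
    obtain ⟨τA, hmapsA, hsurjA, hA⟩ := ih (subtree k b c)
    obtain ⟨τB, hmapsB, hsurjB, hB⟩ := ih (subtree k (!b) c)
    refine ⟨glueTime (2 ^ k - 1) b τA τB, ?_, ?_, ?_⟩
    · rw [two_pow_succ_sub_one]; exact glueTime_mapsTo hmapsA hmapsB
    · rw [two_pow_succ_sub_one]; exact glueTime_surjOn hsurjA hsurjB
    · calc 2 ^ (k + 1 - 1) = 2 ^ (k - 1) + 2 ^ (k - 1) := by
            rw [← two_mul, ← pow_succ']; congr 1; omega
        _ ≤ _ := add_le_add hA hB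
        _ ≤ _ := switchCount_glueTime c τA τB hk

/-- for every `k ≥ 2` and every shift `c ∈ {0,1}^{2^k - 1}`, the shifted
function `x ↦ f_k(x ⊕ c)` has alternation at least `2^(k-2)`. -/
theorem stmt5 (k : ℕ) (hk : 2 ≤ k) (c : Fin (2 ^ k - 1) → Bool) :
    2 ^ (k - 2) ≤ altF (fun x => fTree k (bxor x c)) := by
  obtain ⟨τ, hmaps, hsurj, hτ⟩ := exists_flipTime_two_pow_le_switchCount (by omega : 1 ≤ k) c
  calc 2 ^ (k - 2) ≤ 2 ^ (k - 1) := Nat.pow_le_pow_right two_pos (by omega)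
    _ ≤ _ := hτ
    _ ≤ _ := switchCount_le_altF (fun x => fTree k (bxor x c)) hmaps hsurj
end

section
/- For every even n ≥ 4, Rubinstein's function satisfies alt(f_R) = 2n. -/
open scoped Classical

/-- `hR a = 1` iff `a` has two consecutive ones starting at an odd (1-based) position and
all other coordinates zero; in 0-based indexing: `a` is the indicator of `{j, j+1}` for
some even `j` (0-based) with `j + 1 < n`. -/
def hR {n : ℕ} (a : Fin n → Bool) : Bool :=
  decide (∃ j : Fin n, j.1 % 2 = 0 ∧ j.1 + 1 < n ∧
    ∀ l : Fin n, a l = decide (l.1 = j.1 ∨ l.1 = j.1 + 1))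

/-- Rubinstein's function on an `n × n` Boolean matrix (row `i` is
`y_{i·n}, …, y_{i·n + n - 1}`): the OR over rows of `hR`. -/
def fR (n : ℕ) : (Fin (n * n) → Bool) → Bool := fun y =>
  decide (∃ i : Fin n, hR (fun j : Fin n => y ⟨i.1 * n + j.1, mulIdx_lt i j⟩) = true)

lemma bool_le_true {a b : Bool} (h : a ≤ b) (ha : a = true) : b = true := by
  cases a <;> cases b <;> simp_all <;> exact absurd h (by decide)

lemma succ_mod_eq_two {n : ℕ} (hn : 4 ≤ n) (m : ℕ) : ((m + 1) % n = 2) ↔ (m % n = 1) := by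
  have h1 : (m + 1) % n = (m % n + 1) % n := by
    rw [Nat.add_mod, Nat.mod_eq_of_lt (show 1 < n by omega)]
  have hr : m % n < n := Nat.mod_lt _ (by omega)
  rw [h1]
  rcases Nat.lt_or_ge (m % n + 1) n with h | h
  · rw [Nat.mod_eq_of_lt h]; omega
  · have h2 : m % n + 1 = n := by omega
    rw [h2, Nat.mod_self]; omega

lemma count_mod (n r : ℕ) (hr : r < n) :
    (Finset.univ.filter fun m : Fin (n * n) => m.1 % n = r).card = n := by
  classical
  have himg : (Finset.univ.filter fun m : Fin (n * n) => m.1 % n = r)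
      = Finset.univ.image (fun i : Fin n => (⟨i.1 * n + r, mulIdx_lt i ⟨r, hr⟩⟩ : Fin (n * n))) := by
    ext m
    simp only [Finset.mem_filter, Finset.mem_image, Finset.mem_univ, true_and]
    constructor
    · intro hm
      have hlt : m.1 / n < n := Nat.div_lt_of_lt_mul m.isLt
      refine ⟨⟨m.1 / n, hlt⟩, ?_⟩
      apply Fin.ext
      show m.1 / n * n + r = m.1
      rw [← hm, Nat.div_add_mod']
    · rintro ⟨i, rfl⟩
      show (i.1 * n + r) % n = r
      rw [Nat.add_comm, Nat.add_mul_mod_self_right, Nat.mod_eq_of_lt hr]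
  rw [himg, Finset.card_image_of_injective _ ?_, Finset.card_univ, Fintype.card_fin]
  intro i i' h
  apply Fin.ext
  have h2 := congrArg Fin.val h
  simp only [] at h2
  have hn : 0 < n := lt_of_le_of_lt (Nat.zero_le r) hr
  have h3 : i.1 * n = i'.1 * n := by omega
  exact Nat.eq_of_mul_eq_mul_right hn h3

lemma chain_mono {M : ℕ} {x : Fin (M + 1) → Fin M → Bool}
    (hx : ∀ i : Fin M, ∀ j, x i.castSucc j ≤ x i.succ j) :
    ∀ b a : Fin (M + 1), a ≤ b → ∀ j, x a j ≤ x b j := by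
  intro b
  induction b using Fin.induction with
  | zero =>
    intro a ha j
    have : a = 0 := le_antisymm ha (Fin.zero_le a)
    rw [this]
  | succ i ih =>
    intro a ha j
    by_cases h : a.1 ≤ i.1
    · exact le_trans (ih a (by rw [Fin.le_def, Fin.coe_castSucc]; exact h) j) (hx i j)
    · have : a = i.succ := by
        apply Fin.ext
        rw [Fin.le_def, Fin.val_succ] at ha
        rw [Fin.val_succ]; omega
      rw [this]

lemma hR_convex {n : ℕ} {a b c : Fin n → Bool}
    (hac : ∀ l, a l ≤ c l) (hcb : ∀ l, c l ≤ b l)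
    (ha : hR a = true) (hb : hR b = true) : hR c = true := by
  rw [hR, decide_eq_true_iff] at ha hb ⊢
  obtain ⟨j1, hj1e, hj1lt, hj1⟩ := ha
  obtain ⟨j2, hj2e, hj2lt, hj2⟩ := hb
  refine ⟨j1, hj1e, hj1lt, ?_⟩
  have hb1 : b j1 = true := bool_le_true (le_trans (hac j1) (hcb j1)) (by rw [hj1]; simp)
  have hb2 : b ⟨j1.1 + 1, hj1lt⟩ = true :=
    bool_le_true (le_trans (hac _) (hcb _)) (by rw [hj1]; simp)
  rw [hj2, decide_eq_true_iff] at hb1 hb2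
  simp only [] at hb1 hb2
  have hj12 : j1.1 = j2.1 := by omega
  have hab : ∀ l, a l = b l := fun l => by rw [hj1, hj2, hj12]
  intro l
  have h1 := hac l
  have h2 := hcb l
  rw [hab l] at h1
  have h3 : c l = b l := le_antisymm h2 h1
  rw [h3, hj2, hj12]

lemma hR_prefix {n : ℕ} (hn : 4 ≤ n) (i : Fin n) (k : ℕ) :
    (hR (fun j : Fin n => decide (i.1 * n + j.1 < k)) = true) ↔ k = i.1 * n + 2 := by
  rw [hR, decide_eq_true_iff]
  obtain ⟨c, hc⟩ : ∃ c, c = i.1 * n := ⟨_, rfl⟩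
  rw [← hc]
  constructor
  · rintro ⟨j, hje, hjlt, hj⟩
    have h0 := hj ⟨0, by omega⟩
    have hjj := hj j
    have h2 := hj ⟨2, by omega⟩
    rw [decide_eq_decide] at h0 hjj h2
    simp only [] at h0 hjj h2
    have f1 : c + j.1 < k := hjj.mpr (by tauto)
    have hj0 : j.1 = 0 := by
      by_contra hne
      have : ¬ (c + 0 < k) := fun hh => by rcases h0.mp hh with h | h <;> omega
      omega
    have f2 : ¬ (c + 2 < k) := fun hh => by rcases h2.mp hh with h | h <;> omega
    have h1 := hj ⟨1, by omega⟩
    rw [decide_eq_decide] at h1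
    simp only [] at h1
    have f3 : c + 1 < k := h1.mpr (by omega)
    omega
  · intro hk
    refine ⟨⟨0, by omega⟩, by simp, by simpa using (by omega : 0 + 1 < n), ?_⟩
    intro l
    rw [decide_eq_decide]
    simp only []
    omega

lemma altChain_le_two_mul {n : ℕ} (hn : 4 ≤ n) (x : Fin (n * n + 1) → Fin (n * n) → Bool)
    (hx : IsChainOn x) : altChain (fR n) x ≤ 2 * n := by
  classical
  obtain ⟨-, -, hstep⟩ := hx
  have mono : ∀ b a : Fin (n * n + 1), a ≤ b → ∀ j, x a j ≤ x b j :=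
    chain_mono (fun i j => (hstep i).1 j)
  set P : Fin n → Fin (n * n + 1) → Prop :=
    fun r k => hR (fun j : Fin n => x k ⟨r.1 * n + j.1, mulIdx_lt r j⟩) = true with hPdef
  have hfr : ∀ k, (fR n (x k) = true ↔ ∃ r, P r k) := by
    intro k; simp only [fR, decide_eq_true_iff, hPdef]
  have hconv : ∀ (r : Fin n) (a b c : Fin (n * n + 1)),
      a ≤ b → b ≤ c → P r a → P r c → P r b := by
    intro r a b c hab hbc ha hc
    exact hR_convex (fun l => mono b a hab _) (fun l => mono c b hbc _) ha hc
  have hD : (0 : ℕ) < n := by omega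
  let φu : Fin (n * n) → Fin n := fun i =>
    if h : ∃ r, P r i.succ then h.choose else ⟨0, hD⟩
  let φd : Fin (n * n) → Fin n := fun i =>
    if h : ∃ r, P r i.castSucc then h.choose else ⟨0, hD⟩
  have hφu : ∀ i : Fin (n * n), fR n (x i.succ) = true → P (φu i) i.succ := by
    intro i hi
    have h := (hfr _).mp hi
    simp only [φu, dif_pos h]
    exact h.choose_spec
  have hφd : ∀ i : Fin (n * n), fR n (x i.castSucc) = true → P (φd i) i.castSucc := by
    intro i hi
    have h := (hfr _).mp hi
    simp only [φd, dif_pos h]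
    exact h.choose_spec
  have keyu : ∀ a b : Fin (n * n), a < b → fR n (x a.succ) = true →
      fR n (x b.castSucc) = false → fR n (x b.succ) = true → φu a ≠ φu b := by
    intro a b hab ha hbc hb heq
    have hPa := hφu a ha
    have hPb := hφu b hb
    rw [heq] at hPa
    have hle1 : a.succ ≤ b.castSucc := by
      rw [Fin.le_def, Fin.val_succ, Fin.coe_castSucc]
      have := Fin.lt_def.mp hab; omega
    have hmid : P (φu b) b.castSucc :=
      hconv _ a.succ b.castSucc b.succ hle1 (Fin.castSucc_le_succ b) hPa hPb
    have hT : fR n (x b.castSucc) = true := (hfr _).mpr ⟨_, hmid⟩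
    rw [hbc] at hT
    exact Bool.false_ne_true hT
  have keyd : ∀ a b : Fin (n * n), a < b → fR n (x a.castSucc) = true →
      fR n (x a.succ) = false → fR n (x b.castSucc) = true → φd a ≠ φd b := by
    intro a b hab ha has hb heq
    have hPa := hφd a ha
    have hPb := hφd b hb
    rw [heq] at hPa
    have hle1 : a.succ ≤ b.castSucc := by
      rw [Fin.le_def, Fin.val_succ, Fin.coe_castSucc]
      have := Fin.lt_def.mp hab; omega
    have hmid : P (φd b) a.succ :=
      hconv _ a.castSucc a.succ b.castSucc (Fin.castSucc_le_succ a) hle1 hPa hPb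
    have hT : fR n (x a.succ) = true := (hfr _).mpr ⟨_, hmid⟩
    rw [has] at hT
    exact Bool.false_ne_true hT
  set Su : Finset (Fin (n * n)) := Finset.univ.filter
    (fun i => fR n (x i.castSucc) = false ∧ fR n (x i.succ) = true) with hSu
  set Sd : Finset (Fin (n * n)) := Finset.univ.filter
    (fun i => fR n (x i.castSucc) = true ∧ fR n (x i.succ) = false) with hSd
  have hcardu : Su.card ≤ n := by
    have hinj : Set.InjOn φu ↑Su := by
      intro i hi i' hi' heq
      simp only [hSu, Finset.coe_filter, Finset.mem_univ, true_and, Set.mem_setOf_eq] at hi hi'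
      by_contra hne
      rcases lt_or_gt_of_ne hne with h | h
      · exact keyu i i' h hi.2 hi'.1 hi'.2 heq
      · exact keyu i' i h hi'.2 hi.1 hi.2 heq.symm
    have := Finset.card_le_card_of_injOn φu (fun a _ => Finset.mem_univ (φu a)) hinj
    simpa using this
  have hcardd : Sd.card ≤ n := by
    have hinj : Set.InjOn φd ↑Sd := by
      intro i hi i' hi' heq
      simp only [hSd, Finset.coe_filter, Finset.mem_univ, true_and, Set.mem_setOf_eq] at hi hi'
      by_contra hne
      rcases lt_or_gt_of_ne hne with h | h
      · exact keyd i i' h hi.1 hi.2 hi'.1 heq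
      · exact keyd i' i h hi'.1 hi'.2 hi.1 heq.symm
    have := Finset.card_le_card_of_injOn φd (fun a _ => Finset.mem_univ (φd a)) hinj
    simpa using this
  rw [altChain]
  refine le_trans (le_trans (Finset.card_le_card (show _ ⊆ Su ∪ Sd from ?_))
    (Finset.card_union_le _ _)) (by omega)
  intro i hi
  simp only [hSu, hSd, Finset.mem_union, Finset.mem_filter, Finset.mem_univ, true_and] at hi ⊢
  cases hc : fR n (x i.castSucc) <;> cases hs : fR n (x i.succ) <;> simp_all

lemma chainX_isChain (n : ℕ) :
    IsChainOn (fun (k : Fin (n * n + 1)) (p : Fin (n * n)) => decide (p.1 < k.1)) := by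
  refine ⟨?_, ?_, ?_⟩
  · funext p; simp
  · funext p
    simp only [Fin.val_last, decide_eq_true_iff]
    exact p.isLt
  · intro i
    constructor
    · intro j
      simp only [Fin.coe_castSucc, Fin.val_succ]
      by_cases h : j.1 < i.1
      · simp [h, Nat.lt_succ_of_lt h]
      · simp [h]
    · intro h
      have h2 := congrFun h i
      simp [Fin.coe_castSucc, Fin.val_succ] at h2

lemma fR_chainX (n : ℕ) (hn : 4 ≤ n) (k : Fin (n * n + 1)) :
    fR n (fun p : Fin (n * n) => decide (p.1 < k.1)) = decide (k.1 % n = 2) := by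
  simp only [fR]
  rw [decide_eq_decide]
  constructor
  · rintro ⟨i, hi⟩
    have hk := (hR_prefix hn i k.1).mp hi
    rw [hk, Nat.add_comm, Nat.add_mul_mod_self_right, Nat.mod_eq_of_lt (by omega)]
  · intro h2
    have hlt : k.1 < n * n := by
      rcases Nat.lt_or_ge k.1 (n * n) with h | h
      · exact h
      · exfalso
        have hk : k.1 = n * n := by have := k.isLt; omega
        have hz : n * n % n = 0 := Nat.mul_mod_left n n
        rw [hk, hz] at h2
        omega
    refine ⟨⟨k.1 / n, Nat.div_lt_of_lt_mul hlt⟩, ?_⟩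
    apply (hR_prefix hn _ k.1).mpr
    show k.1 = k.1 / n * n + 2
    rw [← h2]
    exact (Nat.div_add_mod' k.1 n).symm

lemma altChain_chainX (n : ℕ) (hn : 4 ≤ n) :
    altChain (fR n) (fun (k : Fin (n * n + 1)) (p : Fin (n * n)) => decide (p.1 < k.1)) = 2 * n := by
  classical
  rw [altChain]
  have hcond : ∀ i : Fin (n * n),
      ((fR n (fun p : Fin (n * n) => decide (p.1 < (i.succ).1)) ≠
        fR n (fun p : Fin (n * n) => decide (p.1 < (i.castSucc).1)))
      ↔ (i.1 % n = 1 ∨ i.1 % n = 2)) := by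
    intro i
    rw [fR_chainX n hn, fR_chainX n hn, ne_eq, decide_eq_decide,
      Fin.val_succ, Fin.coe_castSucc, succ_mod_eq_two hn]
    generalize i.1 % n = a
    constructor
    · intro h
      by_cases h1 : a = 1
      · exact Or.inl h1
      · refine Or.inr ?_
        by_contra h2
        exact h (iff_of_false h1 h2)
    · intro h h3
      rcases h with h | h
      · have := h3.mp h; omega
      · have := h3.mpr h; omega
  rw [Finset.filter_congr (fun i _ => hcond i), Finset.filter_or,
    Finset.card_union_of_disjoint, count_mod n 1 (by omega), count_mod n 2 (by omega)]
  · omega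
  · rw [Finset.disjoint_left]
    intro a ha hb
    simp only [Finset.mem_filter] at ha hb
    omega

/-- for every even `n ≥ 4`, Rubinstein's function has alternation exactly
`2n`. -/
theorem stmt9 (n : ℕ) (hn : 4 ≤ n) (hev : Even n) : altF (fR n) = 2 * n := by
  classical
  refine le_antisymm ?_ ?_
  · rw [altF]
    apply Finset.sup_le
    intro x _
    split_ifs with hx
    · exact altChain_le_two_mul hn x hx
    · exact Nat.zero_le _
  · have hle := Finset.le_sup (f := fun x : Fin (n * n + 1) → Fin (n * n) → Bool =>
      if IsChainOn x then altChain (fR n) x else 0)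
      (Finset.mem_univ (fun (k : Fin (n * n + 1)) (p : Fin (n * n)) => decide (p.1 < k.1)))
    rw [altF]
    refine le_trans (le_of_eq ?_) hle
    show 2 * n = if IsChainOn (fun (k : Fin (n * n + 1)) (p : Fin (n * n)) => decide (p.1 < k.1))
      then altChain (fR n) (fun (k : Fin (n * n + 1)) (p : Fin (n * n)) => decide (p.1 < k.1)) else 0
    rw [if_pos (chainX_isChain n), altChain_chainX n hn]
end

section
/- For every even n ≥ 4, Rubinstein's function satisfies 4 · bs(f_R) ≥ s(f_R) · salt(f_R), i.e., bs(f_R) ≥ s(f_R)·salt(f_R)/4. -/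
open scoped Classical

/-!
Each of the three quantities is bounded separately. Flipping a coordinate changes a single row.
At a point where `f_R = 1` every sensitive coordinate lies in a row that is an aligned pair
`{2k, 2k+1}`; at a point where `f_R = 0` a row has at most one sensitive coordinate, since distinct
aligned pairs are at Hamming distance 4. Hence `s(f_R) ≤ n`. Along a monotone chain every row
grows monotonically and comparable aligned pairs coincide, so each row is a pair during a single
time interval; `f_R` is the indicator of a union of `n` intervals and alternates at most `2n`
times, whence `salt(f_R) ≤ alt(f_R) ≤ 2n`. Finally the `n · n/2` aligned pairs of all rows are
disjoint sensitive blocks at `0`, so `bs(f_R) ≥ n²/2`.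
-/

open Finset

section Boundary

variable {m : ℕ} (I : Set (Fin (m + 1))) [I.OrdConnected]

lemma card_entries_le_one : #{i : Fin m | i.succ ∈ I ∧ i.castSucc ∉ I} ≤ 1 := by
  refine card_le_one.2 fun i hi j hj => ?_
  simp only [mem_filter, mem_univ, true_and] at hi hj
  by_contra hne
  wlog hij : i < j generalizing i j
  · exact this j i hj hi (Ne.symm hne) (lt_of_le_of_ne (not_lt.1 hij) (Ne.symm hne))
  exact hj.2 (Set.OrdConnected.out' hi.1 hj.1
    ⟨Fin.succ_le_castSucc_iff.2 hij, Fin.castSucc_le_succ j⟩)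

lemma card_exits_le_one : #{i : Fin m | i.castSucc ∈ I ∧ i.succ ∉ I} ≤ 1 := by
  refine card_le_one.2 fun i hi j hj => ?_
  simp only [mem_filter, mem_univ, true_and] at hi hj
  by_contra hne
  wlog hij : i < j generalizing i j
  · exact this j i hj hi (Ne.symm hne) (lt_of_le_of_ne (not_lt.1 hij) (Ne.symm hne))
  exact hi.2 (Set.OrdConnected.out' hi.1 hj.1
    ⟨Fin.castSucc_le_succ i, Fin.succ_le_castSucc_iff.2 hij⟩)

lemma card_boundary_le_two : #{i : Fin m | ¬(i.succ ∈ I ↔ i.castSucc ∈ I)} ≤ 2 := by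
  calc #{i : Fin m | ¬(i.succ ∈ I ↔ i.castSucc ∈ I)}
      ≤ #(({i : Fin m | i.succ ∈ I ∧ i.castSucc ∉ I} : Finset _) ∪
          ({i : Fin m | i.castSucc ∈ I ∧ i.succ ∉ I} : Finset _)) := by
        refine card_le_card fun i => ?_
        simp only [mem_union, mem_filter, mem_univ, true_and]
        tauto
    _ ≤ 1 + 1 := (card_union_le _ _).trans
        (add_le_add (card_entries_le_one I) (card_exits_le_one I))

end Boundary

theorem card_switches_le_of_ordConnected {m : ℕ} {ι : Type*} [Fintype ι]
    (g : Fin (m + 1) → Bool) (I : ι → Set (Fin (m + 1))) (hI : ∀ r, (I r).OrdConnected)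
    (hg : ∀ t, g t = true ↔ ∃ r, t ∈ I r) :
    #{i : Fin m | g i.succ ≠ g i.castSucc} ≤ 2 * Fintype.card ι := by
  calc #{i : Fin m | g i.succ ≠ g i.castSucc}
      ≤ #(univ.biUnion fun r => {i : Fin m | ¬(i.succ ∈ I r ↔ i.castSucc ∈ I r)}) := by
        refine card_le_card fun i => ?_
        simp only [mem_filter, mem_univ, true_and, mem_biUnion]
        intro hi
        by_contra! h
        exact hi (Bool.eq_iff_iff.2 ((hg _).trans ((exists_congr h).trans (hg _).symm)))
    _ ≤ Fintype.card ι * 2 :=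
        card_biUnion_le_card_mul _ _ _ fun r _ => card_boundary_le_two (I r)
    _ = 2 * Fintype.card ι := mul_comm _ _

section Cube

variable {N : ℕ}

lemma bxor_eI (a : Fin N → Bool) (c : Fin N) : bxor a (eI c) = Function.update a c (!a c) := by
  funext j
  by_cases h : j = c
  · subst h; simp [bxor, eI]
  · simp [bxor, eI, h]

@[simp] lemma bxor_false (a : Fin N → Bool) : bxor a (fun _ => false) = a :=
  funext fun i => Bool.xor_false (a i)

@[simp] lemma false_bxor (a : Fin N → Bool) : bxor (fun _ => false) a = a :=
  funext fun i => Bool.false_xor (a i)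

lemma saltF_le_altF (f : (Fin N → Bool) → Bool) : saltF f ≤ altF f := by
  have h := inf'_le (fun b => altF fun x => f (bxor x b)) (mem_univ fun _ => false)
  simp only [bxor_false] at h
  exact h

lemma altF_le {f : (Fin N → Bool) → Bool} {k : ℕ}
    (h : ∀ x : Fin (N + 1) → Fin N → Bool, Monotone x → altChain f x ≤ k) : altF f ≤ k :=
  Finset.sup_le fun x _ => by
    split_ifs with hx
    · exact h x (Fin.monotone_iff_le_succ.2 fun i => (hx.2.2 i).1)
    · exact Nat.zero_le k

lemma card_le_bsAt (f : (Fin N → Bool) → Bool) (a : Fin N → Bool)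
    (S : Finset (Finset (Fin N)))
    (hS : ∀ B ∈ S, B.Nonempty ∧ f (bxor a (eB B)) ≠ f a)
    (hdisj : (S : Set (Finset (Fin N))).PairwiseDisjoint id) : #S ≤ bsAt f a := by
  refine le_trans ?_ (le_sup (mem_univ S))
  rw [if_pos ⟨hS, fun B hB C hC => hdisj hB hC⟩]

end Cube

section Rubinstein

variable {n : ℕ}

def pairInd (n k : ℕ) : Fin n → Bool := fun l => decide (l.1 / 2 = k)

lemma hR_eq_true_iff (a : Fin n → Bool) :
    hR a = true ↔ ∃ k, 2 * k + 1 < n ∧ a = pairInd n k := by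
  simp only [hR, decide_eq_true_eq]
  constructor
  · rintro ⟨j, hj, hjn, ha⟩
    exact ⟨j / 2, by omega, funext fun l => (ha l).trans (decide_eq_decide.2 (by omega))⟩
  · rintro ⟨k, hk, rfl⟩
    refine ⟨⟨2 * k, by omega⟩, by simp, hk, fun l => decide_eq_decide.2 ?_⟩
    simp only
    omega

lemma eq_of_pairInd_le {j k : ℕ} (hj : 2 * j + 1 < n) (h : pairInd n j ≤ pairInd n k) :
    j = k := by
  have h2j := h ⟨2 * j, by omega⟩
  simpa [pairInd, Bool.le_iff_imp] using h2j

lemma hR_of_le_of_le {u v w : Fin n → Bool} (hu : hR u = true) (hw : hR w = true)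
    (huv : u ≤ v) (hvw : v ≤ w) : hR v = true := by
  obtain ⟨j, hj, rfl⟩ := (hR_eq_true_iff u).1 hu
  obtain ⟨k, -, rfl⟩ := (hR_eq_true_iff w).1 hw
  obtain rfl := eq_of_pairInd_le hj (huv.trans hvw)
  rwa [← le_antisymm huv hvw]

/-- Distinct aligned pairs are disjoint, hence at Hamming distance 4: no vector is adjacent to
two of them. -/
lemma eq_of_hR_update_not (a : Fin n → Bool) {c c' : Fin n}
    (h : hR (Function.update a c (!a c)) = true)
    (h' : hR (Function.update a c' (!a c')) = true) : c = c' := by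
  obtain ⟨j, hj, hu⟩ := (hR_eq_true_iff _).1 h
  obtain ⟨k, hk, hv⟩ := (hR_eq_true_iff _).1 h'
  by_contra hne
  have agree : ∀ l (hl : l < n), l ≠ c.1 → l ≠ c'.1 → (l / 2 = j ↔ l / 2 = k) := by
    intro l hl hlc hlc'
    have hul := congrFun hu ⟨l, hl⟩
    have hvl := congrFun hv ⟨l, hl⟩
    rw [Function.update_of_ne (Fin.ne_of_val_ne hlc)] at hul
    rw [Function.update_of_ne (Fin.ne_of_val_ne hlc')] at hvl
    simpa [pairInd] using hul.symm.trans hvl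
  have differ : ¬(c.1 / 2 = j ↔ c.1 / 2 = k) := by
    have huc := congrFun hu c
    have hvc := congrFun hv c
    rw [Function.update_self] at huc
    rw [Function.update_of_ne hne] at hvc
    rw [hvc] at huc
    simp only [pairInd] at huc
    by_cases hck : c.1 / 2 = k <;> simp_all
  have hcc' : c.1 ≠ c'.1 := Fin.val_ne_of_ne hne
  have h0 := agree (2 * j) (by omega)
  have h1 := agree (2 * j + 1) hj
  have h2 := agree (2 * k) (by omega)
  omega

end Rubinstein

section Rows

variable {n : ℕ}

def row (y : Fin (n * n) → Bool) (i : Fin n) : Fin n → Bool :=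
  fun j => y (finProdFinEquiv (i, j))

lemma fR_eq_true_iff (y : Fin (n * n) → Bool) : fR n y = true ↔ ∃ i, hR (row y i) = true := by
  have hcell : ∀ i j : Fin n, (⟨i.1 * n + j.1, mulIdx_lt i j⟩ : Fin (n * n))
      = finProdFinEquiv (i, j) := fun i j => Fin.ext (by simp [finProdFinEquiv_apply_val]; ring)
  simp only [fR, hcell, decide_eq_true_eq]
  rfl

lemma row_mono {y z : Fin (n * n) → Bool} (h : y ≤ z) (i : Fin n) : row y i ≤ row z i :=
  fun _ => h _

lemma row_update_self (y : Fin (n * n) → Bool) (i j : Fin n) (b : Bool) :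
    row (Function.update y (finProdFinEquiv (i, j)) b) i = Function.update (row y i) j b := by
  funext l
  by_cases hl : l = j
  · subst hl; simp [row]
  · simp [row, Function.update_of_ne, hl]

lemma row_update_of_ne (y : Fin (n * n) → Bool) {i i' : Fin n} (h : i' ≠ i) (j : Fin n)
    (b : Bool) : row (Function.update y (finProdFinEquiv (i, j)) b) i' = row y i' :=
  funext fun l => Function.update_of_ne (by simp [h]) _ _

lemma hR_update_row_of_fR_update {y : Fin (n * n) → Bool} (hy : fR n y = false) {i j : Fin n}
    {b : Bool} (h : fR n (Function.update y (finProdFinEquiv (i, j)) b) = true) :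
    hR (Function.update (row y i) j b) = true := by
  obtain ⟨i', hi'⟩ := (fR_eq_true_iff _).1 h
  by_cases hii : i' = i
  · subst hii
    rwa [row_update_self] at hi'
  · rw [row_update_of_ne _ hii] at hi'
    simp [(fR_eq_true_iff y).2 ⟨i', hi'⟩] at hy

end Rows

section Bounds

variable {n : ℕ}

lemma sensAt_fR_le_of_eq_false {a : Fin (n * n) → Bool} (hfa : fR n a = false) :
    sensAt (fR n) a ≤ n := by
  unfold sensAt
  simp_rw [bxor_eI, hfa]
  calc _ ≤ #(univ : Finset (Fin n)) :=
        card_le_card_of_injOn (fun c => (finProdFinEquiv.symm c).1) (by simp) ?_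
    _ = n := by simp
  intro c hc c' hc' hrow
  obtain ⟨⟨i, j⟩, rfl⟩ := finProdFinEquiv.surjective c
  obtain ⟨⟨i', j'⟩, rfl⟩ := finProdFinEquiv.surjective c'
  simp only [Equiv.symm_apply_apply] at hrow
  subst hrow
  simp only [coe_filter, mem_univ, true_and, ne_eq, Bool.not_eq_false] at hc hc'
  rw [eq_of_hR_update_not (row a i) (hR_update_row_of_fR_update hfa hc)
    (hR_update_row_of_fR_update hfa hc')]

lemma sensAt_fR_le_of_eq_true {a : Fin (n * n) → Bool} (hfa : fR n a = true) :
    sensAt (fR n) a ≤ n := by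
  unfold sensAt
  simp_rw [bxor_eI, hfa]
  obtain ⟨w, hw⟩ := (fR_eq_true_iff a).1 hfa
  calc _ ≤ #(univ.image fun j => finProdFinEquiv (w, j)) := card_le_card ?_
    _ ≤ n := card_image_le.trans (by simp)
  intro c hc
  obtain ⟨⟨i, j⟩, rfl⟩ := finProdFinEquiv.surjective c
  simp only [mem_filter, mem_univ, true_and, ne_eq, Bool.not_eq_true] at hc
  by_cases hiw : w = i
  · exact mem_image.2 ⟨j, mem_univ _, by rw [hiw]⟩
  · rw [← Bool.not_eq_true, fR_eq_true_iff] at hc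
    exact absurd ⟨w, by rwa [row_update_of_ne _ hiw]⟩ hc

lemma sens_fR_le : sens (fR n) ≤ n :=
  Finset.sup_le fun a _ => by
    cases hfa : fR n a
    exacts [sensAt_fR_le_of_eq_false hfa, sensAt_fR_le_of_eq_true hfa]

lemma altF_fR_le : altF (fR n) ≤ 2 * n := by
  refine altF_le fun x hx => ?_
  simpa [altChain] using card_switches_le_of_ordConnected (fun t => fR n (x t))
    (fun r => {t | hR (row (x t) r) = true})
    (fun r => ⟨fun s hs u hu t ht =>
      hR_of_le_of_le hs hu (row_mono (hx ht.1) r) (row_mono (hx ht.2) r)⟩)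
    (fun t => fR_eq_true_iff _)

def pairBlock (i : Fin n) (k : ℕ) : Finset (Fin (n * n)) :=
  ({j : Fin n | j.1 / 2 = k} : Finset (Fin n)).image fun j => finProdFinEquiv (i, j)

lemma mem_pairBlock_iff {i i' j : Fin n} {k : ℕ} :
    finProdFinEquiv (i', j) ∈ pairBlock i k ↔ i' = i ∧ j.1 / 2 = k := by
  simp only [pairBlock, mem_image, mem_filter, mem_univ, true_and, EmbeddingLike.apply_eq_iff_eq,
    Prod.mk.injEq]
  exact ⟨fun ⟨_, hj, hi, hjj⟩ => ⟨hi.symm, hjj ▸ hj⟩,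
    fun ⟨hi, hj⟩ => ⟨j, hj, hi.symm, rfl⟩⟩

lemma fR_eB_pairBlock (i : Fin n) {k : ℕ} (hk : 2 * k + 1 < n) :
    fR n (eB (pairBlock i k)) = true :=
  (fR_eq_true_iff _).2 ⟨i, (hR_eq_true_iff _).2 ⟨k, hk, funext fun j => by
    simp [row, eB, pairInd, mem_pairBlock_iff]⟩⟩

lemma fR_false : fR n (fun _ => false) = false := by
  rw [Bool.eq_false_iff]
  intro h
  obtain ⟨i, hi⟩ := (fR_eq_true_iff _).1 h
  obtain ⟨k, hk, hrow⟩ := (hR_eq_true_iff _).1 hi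
  simpa [row, pairInd] using congrFun hrow ⟨2 * k, by omega⟩

lemma pairBlock_nonempty (i : Fin n) {k : ℕ} (hk : 2 * k < n) : (pairBlock i k).Nonempty :=
  ⟨_, mem_pairBlock_iff (j := ⟨2 * k, hk⟩) |>.2 ⟨rfl, by simp⟩⟩

lemma eq_of_not_disjoint_pairBlock {i i' : Fin n} {k k' : ℕ}
    (h : ¬Disjoint (pairBlock i k) (pairBlock i' k')) : i = i' ∧ k = k' := by
  obtain ⟨c, hc, hc'⟩ := not_disjoint_iff.1 h
  obtain ⟨⟨r, j⟩, rfl⟩ := finProdFinEquiv.surjective c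
  obtain ⟨rfl, rfl⟩ := mem_pairBlock_iff.1 hc
  obtain ⟨rfl, rfl⟩ := mem_pairBlock_iff.1 hc'
  exact ⟨rfl, rfl⟩

lemma bs_fR_ge : n * (n / 2) ≤ bs (fR n) := by
  set block := fun p : Fin n × Fin (n / 2) => pairBlock p.1 p.2.1
  have hk : ∀ k : Fin (n / 2), 2 * k.1 + 1 < n := fun k => by omega
  have inj : Function.Injective block := by
    rintro ⟨i, k⟩ ⟨i', k'⟩ h
    have hnd : ¬Disjoint (block (i, k)) (block (i', k')) := by
      rw [h, disjoint_self_iff_empty]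
      exact (pairBlock_nonempty i' (by omega)).ne_empty
    obtain ⟨hi, hkk⟩ := eq_of_not_disjoint_pairBlock hnd
    exact Prod.ext hi (Fin.ext hkk)
  calc n * (n / 2) = #(univ.image block) := by
        rw [card_image_of_injective _ inj]; simp
    _ ≤ bsAt (fR n) (fun _ => false) := by
        refine card_le_bsAt _ _ _ ?_ ?_
        · simp only [mem_image, mem_univ, true_and, false_bxor, fR_false]
          rintro _ ⟨⟨i, k⟩, rfl⟩
          exact ⟨pairBlock_nonempty i (by omega),
            by simp [block, fR_eB_pairBlock i (hk k)]⟩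
        · simp only [coe_image, coe_univ, Set.image_univ]
          rintro _ ⟨p, rfl⟩ _ ⟨q, rfl⟩ hne
          by_contra hnd
          obtain ⟨hi, hk⟩ := eq_of_not_disjoint_pairBlock hnd
          exact hne (by simp only [block, hi, hk])
    _ ≤ bs (fR n) := le_sup (mem_univ _)

end Bounds

theorem stmt11_general (n : ℕ) (hev : Even n) :
    sens (fR n) * saltF (fR n) ≤ 4 * bs (fR n) := by
  obtain ⟨t, rfl⟩ := hev
  calc sens (fR (t + t)) * saltF (fR (t + t))
      ≤ (t + t) * (2 * (t + t)) :=
        Nat.mul_le_mul sens_fR_le ((saltF_le_altF _).trans altF_fR_le)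
    _ = 4 * ((t + t) * ((t + t) / 2)) := by rw [show (t + t) / 2 = t by omega]; ring
    _ ≤ 4 * bs (fR (t + t)) := Nat.mul_le_mul_left 4 bs_fR_ge

/-- for every even `n ≥ 4`, Rubinstein's function satisfies
`4 · bs(f_R) ≥ s(f_R) · salt(f_R)`. -/
theorem stmt11 (n : ℕ) (hn : 4 ≤ n) (hev : Even n) :
    sens (fR n) * saltF (fR n) ≤ 4 * bs (fR n) :=
  stmt11_general n hev
end

section
/- Fix a prime p and let f : {0,1}^n → {0,1} with multilinear F_p-representation P, and suppose deg(P) ≥ 1. Then for every monomial m of P with nonzero coefficient and degree equal to deg(P), there exists a nonempty set B contained in the set of variable indices of m such that f(e_B) ≠ f(0^n). -/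
open scoped Classical

/-- A Boolean input viewed as an `F_p` point. -/
def toFp (p : ℕ) {n : ℕ} (x : Fin n → Bool) : Fin n → ZMod p := fun i => if x i then 1 else 0

section aux

variable {p n : ℕ}

lemma pow_sum_aux (S : Finset (Fin n)) :
    (∑ B ∈ S.powerset, (-1 : ZMod p) ^ B.card) = if S = ∅ then 1 else 0 := by
  have h := Finset.sum_powerset_neg_one_pow_card (x := S)
  calc (∑ B ∈ S.powerset, (-1 : ZMod p) ^ B.card)
      = (((∑ B ∈ S.powerset, (-1 : ℤ) ^ B.card) : ℤ) : ZMod p) := by push_cast; rfl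
    _ = if S = ∅ then 1 else 0 := by rw [h]; split <;> simp

lemma eval_eB (P : MvPolynomial (Fin n) (ZMod p))
    (hml : ∀ m ∈ P.support, ∀ i : Fin n, m i ≤ 1) (B : Finset (Fin n)) :
    MvPolynomial.eval (toFp p (eB B)) P
      = ∑ d ∈ P.support, P.coeff d * (if d.support ⊆ B then 1 else 0) := by
  rw [MvPolynomial.eval_eq]
  refine Finset.sum_congr rfl fun d hd => ?_
  congr 1
  have hprod : ∀ i ∈ d.support, (toFp p (eB B) i) ^ d i
      = (if i ∈ B then (1 : ZMod p) else 0) := by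
    intro i hi
    have h1 : d i = 1 := le_antisymm (hml d hd i) (Finsupp.mem_support_iff.mp hi).bot_lt
    simp [h1, toFp, eB]
  rw [Finset.prod_congr rfl hprod]
  by_cases hsub : d.support ⊆ B
  · rw [if_pos hsub, Finset.prod_eq_one]
    intro i hi; rw [if_pos (hsub hi)]
  · rw [if_neg hsub]
    obtain ⟨i, hi, hiB⟩ := Finset.not_subset.mp hsub
    exact Finset.prod_eq_zero hi (if_neg hiB)

lemma innerAltSum (S T : Finset (Fin n)) :
    (∑ B ∈ S.powerset.filter (fun B => T ⊆ B), (-1 : ZMod p) ^ B.card)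
      = if T = S then (-1 : ZMod p) ^ T.card else 0 := by
  by_cases hTS : T ⊆ S
  · have key : (∑ B ∈ S.powerset.filter (fun B => T ⊆ B), (-1 : ZMod p) ^ B.card)
        = ∑ C ∈ (S \ T).powerset, (-1 : ZMod p) ^ (T ∪ C).card := by
      refine Finset.sum_nbij' (fun B => B \ T) (fun C => T ∪ C) ?_ ?_ ?_ ?_ ?_
      · intro B hB
        simp only [Finset.mem_filter, Finset.mem_powerset] at hB
        simp only [Finset.mem_powerset]
        exact Finset.sdiff_subset_sdiff hB.1 le_rfl
      · intro C hC
        simp only [Finset.mem_powerset] at hC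
        simp only [Finset.mem_filter, Finset.mem_powerset]
        exact ⟨Finset.union_subset hTS (hC.trans Finset.sdiff_subset), Finset.subset_union_left⟩
      · intro B hB
        simp only [Finset.mem_filter, Finset.mem_powerset] at hB
        exact Finset.union_sdiff_of_subset hB.2
      · intro C hC
        simp only [Finset.mem_powerset] at hC
        have : Disjoint T C := Finset.disjoint_of_subset_right hC Finset.disjoint_sdiff
        rw [Finset.union_sdiff_cancel_left this]
      · intro B hB
        simp only [Finset.mem_filter, Finset.mem_powerset] at hB
        rw [Finset.union_sdiff_of_subset hB.2]
    rw [key]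
    have : ∀ C ∈ (S \ T).powerset, (-1 : ZMod p) ^ (T ∪ C).card
        = (-1 : ZMod p) ^ T.card * (-1 : ZMod p) ^ C.card := by
      intro C hC
      simp only [Finset.mem_powerset] at hC
      have hd : Disjoint T C := Finset.disjoint_of_subset_right hC Finset.disjoint_sdiff
      rw [Finset.card_union_of_disjoint hd, pow_add]
    rw [Finset.sum_congr rfl this, ← Finset.mul_sum, pow_sum_aux]
    by_cases h : S ⊆ T
    · rw [if_pos (Finset.sdiff_eq_empty_iff_subset.mpr h), if_pos (le_antisymm hTS h), mul_one]
    · rw [if_neg (fun he => h (Finset.sdiff_eq_empty_iff_subset.mp he)),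
        if_neg (fun he => h (le_of_eq he.symm)), mul_zero]
  · rw [if_neg (fun he => hTS (le_of_eq he))]
    rw [Finset.filter_false_of_mem, Finset.sum_empty]
    intro B hB
    simp only [Finset.mem_powerset] at hB
    exact fun hTB => hTS (hTB.trans hB)

end aux

/-- fix a prime `p` and let `P` be the multilinear `F_p`-representation of
`f` with `deg P ≥ 1`. Then every monomial of `P` with nonzero coefficient and degree equal
to `deg P` contains a nonempty set `B` of its variable indices with `f(e_B) ≠ f(0^n)`. -/
theorem stmt14 (p : ℕ) (hp : p.Prime) (n : ℕ) (f : (Fin n → Bool) → Bool)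
    (P : MvPolynomial (Fin n) (ZMod p))
    (hml : ∀ m ∈ P.support, ∀ i : Fin n, m i ≤ 1)
    (hagree : ∀ x : Fin n → Bool,
      MvPolynomial.eval (toFp p x) P = (if f x then 1 else 0))
    (hdeg : 1 ≤ P.totalDegree) :
    ∀ m ∈ P.support, (m.sum fun _ e => e) = P.totalDegree →
      ∃ B : Finset (Fin n), B ⊆ m.support ∧ B.Nonempty ∧
        f (eB B) ≠ f (fun _ => false) := by
  intro m hm hmdeg
  by_contra hcon
  push_neg at hcon
  set S := m.support with hS
  -- S is nonempty
  have hSne : S.Nonempty := by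
    rw [Finset.nonempty_iff_ne_empty]
    intro he
    have : m = 0 := by
      ext i
      by_contra h
      exact absurd (Finsupp.mem_support_iff.mpr h) (by simp [← hS, he])
    rw [this] at hmdeg
    simp at hmdeg
    omega
  -- eval at eB B is constant for B ⊆ S
  have heB0 : eB (∅ : Finset (Fin n)) = fun _ => false := by
    funext i; simp [eB]
  have hconst : ∀ B ∈ S.powerset,
      MvPolynomial.eval (toFp p (eB B)) P
        = MvPolynomial.eval (toFp p (fun _ => false)) P := by
    intro B hB
    simp only [Finset.mem_powerset] at hB
    rcases B.eq_empty_or_nonempty with rfl | hBne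
    · rw [heB0]
    · rw [hagree, hagree, hcon B hB hBne]
  -- key identity: alternating sum equals (-1)^|S| * coeff m
  have hkey : (∑ B ∈ S.powerset, (-1 : ZMod p) ^ B.card
        * MvPolynomial.eval (toFp p (eB B)) P)
      = (-1 : ZMod p) ^ S.card * P.coeff m := by
    calc (∑ B ∈ S.powerset, (-1 : ZMod p) ^ B.card
          * MvPolynomial.eval (toFp p (eB B)) P)
        = ∑ B ∈ S.powerset, ∑ d ∈ P.support,
            P.coeff d * ((-1 : ZMod p) ^ B.card * (if d.support ⊆ B then 1 else 0)) := by
          refine Finset.sum_congr rfl fun B _ => ?_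
          rw [eval_eB P hml B, Finset.mul_sum]
          refine Finset.sum_congr rfl fun d _ => by ring
      _ = ∑ d ∈ P.support, P.coeff d *
            ∑ B ∈ S.powerset, ((-1 : ZMod p) ^ B.card * (if d.support ⊆ B then 1 else 0)) := by
          rw [Finset.sum_comm]
          exact Finset.sum_congr rfl fun d _ => by rw [Finset.mul_sum]
      _ = ∑ d ∈ P.support, P.coeff d *
            (if d.support = S then (-1 : ZMod p) ^ d.support.card else 0) := by
          refine Finset.sum_congr rfl fun d _ => ?_
          congr 1
          rw [← innerAltSum S d.support, Finset.sum_filter]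
          refine Finset.sum_congr rfl fun B _ => ?_
          split <;> simp
      _ = (-1 : ZMod p) ^ S.card * P.coeff m := by
          rw [Finset.sum_eq_single m]
          · rw [if_pos hS.symm, ← hS]; ring
          · intro d hd hne
            have : ¬ d.support = S := by
              intro he
              apply hne
              ext i
              by_cases hi : i ∈ S
              · have h1 : d i = 1 := le_antisymm (hml d hd i)
                  (Finsupp.mem_support_iff.mp (he ▸ hi : i ∈ d.support)).bot_lt
                have h2 : m i = 1 := le_antisymm (hml m hm i)
                  (Finsupp.mem_support_iff.mp (hS ▸ hi)).bot_lt
                rw [h1, h2]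
              · have h1 : d i = 0 := by
                  by_contra h
                  exact hi (he ▸ Finsupp.mem_support_iff.mpr h)
                have h2 : m i = 0 := by
                  by_contra h
                  exact hi (hS ▸ Finsupp.mem_support_iff.mpr h)
                rw [h1, h2]
            rw [if_neg this, mul_zero]
          · intro h; exact absurd hm h
  -- but LHS is zero by constancy
  have hzero : (∑ B ∈ S.powerset, (-1 : ZMod p) ^ B.card
        * MvPolynomial.eval (toFp p (eB B)) P) = 0 := by
    rw [Finset.sum_congr rfl (fun B hB => by rw [hconst B hB]),
      ← Finset.sum_mul, pow_sum_aux, if_neg (Finset.nonempty_iff_ne_empty.mp hSne), zero_mul]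
  rw [hzero] at hkey
  have : P.coeff m = 0 := by
    have hu : IsUnit ((-1 : ZMod p) ^ S.card) := (IsUnit.neg isUnit_one).pow _
    exact (hu.mul_right_eq_zero).mp hkey.symm
  exact absurd this (MvPolynomial.mem_support_iff.mp hm)
end

section
/- Fix a prime p and let f : {0,1}^n → {0,1} with multilinear F_p-representation P, and suppose deg_p(f) ≥ 1. Then there exists a set H ⊆ [n] with |H| ≤ bs(f,0^n) · deg_p(f) such that every monomial of P with nonzero coefficient and degree equal to deg(P) contains a variable whose index lies in H. -/
open scoped Classical

section Aux

open Finset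

/-- Alternating sum over a powerset, complemented version. -/
lemma altSum {α : Type*} [DecidableEq α] {R : Type*} [CommRing R] (C : Finset α) :
    ∑ S ∈ C.powerset, (-1 : R) ^ (C \ S).card = if C = ∅ then 1 else 0 := by
  have h1 : ∑ S ∈ C.powerset, (-1 : R) ^ (C \ S).card
      = ∑ S ∈ C.powerset, (-1 : R) ^ S.card := by
    refine Finset.sum_nbij' (fun S => C \ S) (fun S => C \ S) ?_ ?_ ?_ ?_ ?_
    · intro a _; exact Finset.mem_powerset.mpr Finset.sdiff_subset
    · intro a _; exact Finset.mem_powerset.mpr Finset.sdiff_subset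
    · intro a ha; exact Finset.sdiff_sdiff_eq_self (Finset.mem_powerset.mp ha)
    · intro a ha; exact Finset.sdiff_sdiff_eq_self (Finset.mem_powerset.mp ha)
    · intro a _; rfl
  rw [h1]
  have h2 := Finset.sum_powerset_neg_one_pow_card (x := C)
  calc ∑ S ∈ C.powerset, (-1 : R) ^ S.card
      = ((∑ S ∈ C.powerset, (-1 : ℤ) ^ S.card : ℤ) : R) := by push_cast; rfl
    _ = if C = ∅ then 1 else 0 := by rw [h2]; split <;> simp

/-- The key sign identity: summing signs over supersets of `B` inside `A`. -/
lemma hitSum {α : Type*} [DecidableEq α] {R : Type*} [CommRing R] (B A : Finset α) :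
    ∑ S ∈ A.powerset, (-1 : R) ^ (A \ S).card * (if B ⊆ S then 1 else 0)
      = if B = A then 1 else 0 := by
  have step : (∑ S ∈ A.powerset, (-1 : R) ^ (A \ S).card * (if B ⊆ S then 1 else 0))
      = ∑ S ∈ A.powerset.filter (fun S => B ⊆ S), (-1 : R) ^ (A \ S).card := by
    rw [Finset.sum_filter]
    refine Finset.sum_congr rfl fun S _ => ?_
    split <;> simp
  rw [step]
  by_cases hBA : B ⊆ A
  · have hbij : ∑ S ∈ A.powerset.filter (fun S => B ⊆ S), (-1 : R) ^ (A \ S).card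
        = ∑ T ∈ (A \ B).powerset, (-1 : R) ^ ((A \ B) \ T).card := by
      refine Finset.sum_nbij' (fun S => S \ B) (fun T => B ∪ T) ?_ ?_ ?_ ?_ ?_
      · intro S hS
        simp only [Finset.mem_filter, Finset.mem_powerset] at hS ⊢
        exact Finset.sdiff_subset_sdiff hS.1 le_rfl
      · intro T hT
        simp only [Finset.mem_powerset] at hT
        simp only [Finset.mem_filter, Finset.mem_powerset]
        exact ⟨Finset.union_subset hBA (hT.trans Finset.sdiff_subset),
          Finset.subset_union_left⟩
      · intro S hS
        simp only [Finset.mem_filter, Finset.mem_powerset] at hS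
        exact Finset.union_sdiff_of_subset hS.2
      · intro T hT
        simp only [Finset.mem_powerset] at hT
        have hd : Disjoint B T := by
          rw [Finset.disjoint_left]
          intro i hiB hiT
          exact ((Finset.mem_sdiff.mp (hT hiT)).2 hiB)
        exact Finset.union_sdiff_cancel_left hd
      · intro S hS
        simp only [Finset.mem_filter, Finset.mem_powerset] at hS
        have : A \ S = (A \ B) \ (S \ B) := by
          ext i
          simp only [Finset.mem_sdiff]
          constructor
          · rintro ⟨hiA, hiS⟩
            exact ⟨⟨hiA, fun h => hiS (hS.2 h)⟩, fun h => hiS h.1⟩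
          · rintro ⟨⟨hiA, hiB⟩, h⟩
            exact ⟨hiA, fun hiS => h ⟨hiS, hiB⟩⟩
        rw [this]
    rw [hbij, altSum]
    have hiff : (A \ B = ∅) ↔ (B = A) := by
      rw [Finset.sdiff_eq_empty_iff_subset]
      exact ⟨fun h => le_antisymm hBA h, fun h => h ▸ le_rfl⟩
    by_cases h : B = A
    · rw [if_pos (hiff.mpr h), if_pos h]
    · rw [if_neg (fun he => h (hiff.mp he)), if_neg h]
  · have hemp : A.powerset.filter (fun S => B ⊆ S) = ∅ := by
      ext S
      simp only [Finset.mem_filter, Finset.mem_powerset, Finset.notMem_empty, iff_false,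
        not_and]
      intro h1 h2
      exact hBA (h2.trans h1)
    rw [hemp, Finset.sum_empty, eq_comm, if_neg]
    intro h
    exact hBA (h ▸ le_rfl)

/-- Evaluating a multivariate polynomial at the 0/1 indicator point of `S`. -/
lemma evalAt {p n : ℕ} (P : MvPolynomial (Fin n) (ZMod p)) (S : Finset (Fin n)) :
    MvPolynomial.eval (toFp p (eB S)) P
      = ∑ m ∈ P.support, P.coeff m * (if m.support ⊆ S then 1 else 0) := by
  rw [MvPolynomial.eval_eq]
  refine Finset.sum_congr rfl fun m _ => ?_
  congr 1
  by_cases h : m.support ⊆ S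
  · rw [if_pos h]
    refine Finset.prod_eq_one fun i hi => ?_
    have h1 : toFp p (eB S) i = 1 := by simp [toFp, eB, h hi]
    rw [h1, one_pow]
  · rw [if_neg h]
    obtain ⟨i, hiM, hiS⟩ := Finset.not_subset.mp h
    refine Finset.prod_eq_zero hiM ?_
    have h0 : toFp p (eB S) i = 0 := by simp [toFp, eB, hiS]
    rw [h0]
    exact zero_pow (by simpa [Finsupp.mem_support_iff] using hiM)

end Aux

set_option maxHeartbeats 1600000 in
/-- fix a prime `p` and let `P` be the multilinear `F_p`-representation of
`f` with `deg_p(f) ≥ 1`. Then there is a "hitting set" `H ⊆ [n]` of size at most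
`bs(f, 0^n) · deg_p(f)` meeting every maximal-degree monomial of `P` with nonzero
coefficient. -/
theorem stmt15 (p : ℕ) (hp : p.Prime) (n : ℕ) (f : (Fin n → Bool) → Bool)
    (P : MvPolynomial (Fin n) (ZMod p))
    (hml : ∀ m ∈ P.support, ∀ i : Fin n, m i ≤ 1)
    (hagree : ∀ x : Fin n → Bool,
      MvPolynomial.eval (toFp p x) P = (if f x then 1 else 0))
    (hdeg : 1 ≤ P.totalDegree) :
    ∃ H : Finset (Fin n), H.card ≤ bsAt f (fun _ => false) * P.totalDegree ∧
      ∀ m ∈ P.support, (m.sum fun _ e => e) = P.totalDegree →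
        (m.support ∩ H).Nonempty := by
  classical
  set d := P.totalDegree with hd
  set a : Fin n → Bool := (fun _ => false) with ha
  have heB0 : eB (∅ : Finset (Fin n)) = a := by funext i; simp [eB, ha]
  -- degree of a monomial equals cardinality of its support (multilinearity)
  have hcard : ∀ m ∈ P.support, (m.sum fun _ e => e) = m.support.card := by
    intro m hm
    rw [Finsupp.sum]
    rw [show (∑ i ∈ m.support, m i) = ∑ _i ∈ m.support, 1 from
      Finset.sum_congr rfl fun i hi => le_antisymm (hml m hm i)
        (Nat.one_le_iff_ne_zero.mpr (Finsupp.mem_support_iff.mp hi))]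
    simp
  -- KEY: each maximal-degree monomial yields a sensitive block at 0 inside its support
  have key : ∀ m ∈ P.support, (m.sum fun _ e => e) = d →
      ∃ S ⊆ m.support, f (eB S) ≠ f a := by
    intro m hm hmd
    by_contra hcon
    push_neg at hcon
    set A := m.support with hA
    have hAcard : A.card = d := by rw [← hcard m hm, hmd]
    have hAne : A ≠ ∅ := by
      intro h
      rw [h, Finset.card_empty] at hAcard
      omega
    -- uniqueness of the monomial with support A among multilinear monomials
    have huniq : ∀ m' ∈ P.support, m'.support = A → m' = m := by
      intro m' hm' hsup
      ext i
      by_cases hi : i ∈ A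
      · have h1 : m' i = 1 := le_antisymm (hml m' hm' i)
          (Nat.one_le_iff_ne_zero.mpr (Finsupp.mem_support_iff.mp (hsup ▸ hi)))
        have h2 : m i = 1 := le_antisymm (hml m hm i)
          (Nat.one_le_iff_ne_zero.mpr (Finsupp.mem_support_iff.mp hi))
        rw [h1, h2]
      · have h1 : m' i = 0 := by
          by_contra h
          exact hi (hsup ▸ Finsupp.mem_support_iff.mpr h)
        have h2 : m i = 0 := by
          by_contra h
          exact hi (Finsupp.mem_support_iff.mpr h)
        rw [h1, h2]
    -- the alternating sum equals the coefficient of m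
    have main : ∑ S ∈ A.powerset, (-1 : ZMod p) ^ (A \ S).card
        * MvPolynomial.eval (toFp p (eB S)) P = P.coeff m := by
      calc ∑ S ∈ A.powerset, (-1 : ZMod p) ^ (A \ S).card
            * MvPolynomial.eval (toFp p (eB S)) P
          = ∑ S ∈ A.powerset, ∑ m' ∈ P.support,
              P.coeff m' * ((-1 : ZMod p) ^ (A \ S).card
                * (if m'.support ⊆ S then 1 else 0)) := by
            refine Finset.sum_congr rfl fun S _ => ?_
            rw [evalAt, Finset.mul_sum]
            exact Finset.sum_congr rfl fun m' _ => by ring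
        _ = ∑ m' ∈ P.support, P.coeff m' * ∑ S ∈ A.powerset,
              (-1 : ZMod p) ^ (A \ S).card * (if m'.support ⊆ S then 1 else 0) := by
            rw [Finset.sum_comm]
            exact Finset.sum_congr rfl fun m' _ => by rw [Finset.mul_sum]
        _ = ∑ m' ∈ P.support, P.coeff m' * (if m'.support = A then 1 else 0) := by
            refine Finset.sum_congr rfl fun m' _ => ?_
            rw [hitSum]
        _ = P.coeff m := by
            rw [Finset.sum_eq_single_of_mem m hm]
            · rw [if_pos hA.symm, mul_one]
            · intro m' hm' hne
              rw [if_neg, mul_zero]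
              intro h
              exact hne (huniq m' hm' h)
    -- but the alternating sum is 0 since f is constant on the subcube
    have hzero : ∑ S ∈ A.powerset, (-1 : ZMod p) ^ (A \ S).card
        * MvPolynomial.eval (toFp p (eB S)) P = 0 := by
      have hconst : ∀ S ∈ A.powerset, MvPolynomial.eval (toFp p (eB S)) P
          = (if f a then 1 else 0) := by
        intro S hS
        rw [hagree, hcon S (Finset.mem_powerset.mp hS)]
      rw [Finset.sum_congr rfl fun S hS => by rw [hconst S hS]]
      rw [← Finset.sum_mul, altSum, if_neg hAne, zero_mul]
    rw [main] at hzero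
    exact (MvPolynomial.mem_support_iff.mp hm) hzero
  -- the set of supports of maximal-degree monomials
  set M : Finset (Finset (Fin n)) :=
    (P.support.filter fun m => (m.sum fun _ e => e) = d).image Finsupp.support with hM
  have hMcard : ∀ A ∈ M, A.card = d := by
    intro A hA
    obtain ⟨m, hm, rfl⟩ := Finset.mem_image.mp hA
    obtain ⟨hm1, hm2⟩ := Finset.mem_filter.mp hm
    rw [← hcard m hm1, hm2]
  have hMsens : ∀ A ∈ M, ∃ S, S ⊆ A ∧ S.Nonempty ∧ f (eB S) ≠ f a := by
    intro A hA
    obtain ⟨m, hm, rfl⟩ := Finset.mem_image.mp hA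
    obtain ⟨hm1, hm2⟩ := Finset.mem_filter.mp hm
    obtain ⟨S, hS1, hS2⟩ := key m hm1 hm2
    refine ⟨S, hS1, ?_, hS2⟩
    rcases Finset.eq_empty_or_nonempty S with h | h
    · exact absurd (by rw [h, heB0]) hS2
    · exact h
  -- choose a maximal pairwise disjoint subfamily of M
  set cand : Finset (Finset (Finset (Fin n))) :=
    M.powerset.filter fun F => ∀ A ∈ F, ∀ B ∈ F, A ≠ B → Disjoint A B with hcand
  have hcne : cand.Nonempty := ⟨∅, by simp [hcand]⟩
  obtain ⟨F, hFmem, hFmax⟩ := Finset.exists_max_image cand Finset.card hcne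
  obtain ⟨hFsub, hFdisj⟩ := Finset.mem_filter.mp hFmem
  rw [Finset.mem_powerset] at hFsub
  refine ⟨F.biUnion id, ?_, ?_⟩
  · -- cardinality bound
    have h1 : (F.biUnion id).card ≤ ∑ A ∈ F, A.card := Finset.card_biUnion_le
    have h2 : ∑ A ∈ F, A.card = F.card * d := by
      rw [Finset.sum_congr rfl fun A hA => hMcard A (hFsub hA)]
      simp [mul_comm]
    have h3 : F.card ≤ bsAt f a := by
      -- build the sensitive block family
      set blk : Finset (Fin n) → Finset (Fin n) := fun A =>
        if h : ∃ S, S ⊆ A ∧ S.Nonempty ∧ f (eB S) ≠ f a then h.choose else ∅ with hblk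
      have hblkspec : ∀ A ∈ F, blk A ⊆ A ∧ (blk A).Nonempty ∧ f (eB (blk A)) ≠ f a := by
        intro A hA
        have h := hMsens A (hFsub hA)
        rw [hblk]
        simp only [dif_pos h]
        exact h.choose_spec
      have hinj : Set.InjOn blk F := by
        intro A hA B hB hAB
        by_contra hne
        have hd := hFdisj A hA B hB hne
        have h1 := (hblkspec A hA).1
        have h2 := (hblkspec B hB).1
        obtain ⟨i, hi⟩ := (hblkspec A hA).2.1
        exact (Finset.disjoint_left.mp (hd.mono h1 h2) hi) (hAB ▸ hi)
      set T : Finset (Finset (Fin n)) := F.image blk with hT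
      have hTcard : T.card = F.card := Finset.card_image_of_injOn hinj
      have hbx : ∀ x, bxor a x = x := by
        intro x; funext i; simp [bxor, ha]
      have hcond : (∀ B ∈ T, B.Nonempty ∧ f (bxor a (eB B)) ≠ f a) ∧
          (∀ B ∈ T, ∀ C ∈ T, B ≠ C → Disjoint B C) := by
        constructor
        · intro B hB
          obtain ⟨A, hA, rfl⟩ := Finset.mem_image.mp hB
          exact ⟨(hblkspec A hA).2.1, by rw [hbx]; exact (hblkspec A hA).2.2⟩
        · intro B hB C hC hne
          obtain ⟨A1, hA1, rfl⟩ := Finset.mem_image.mp hB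
          obtain ⟨A2, hA2, rfl⟩ := Finset.mem_image.mp hC
          have hA12 : A1 ≠ A2 := fun h => hne (h ▸ rfl)
          exact (hFdisj A1 hA1 A2 hA2 hA12).mono (hblkspec A1 hA1).1 (hblkspec A2 hA2).1
      have hle := Finset.le_sup (f := fun S : Finset (Finset (Fin n)) =>
        if (∀ B ∈ S, B.Nonempty ∧ f (bxor a (eB B)) ≠ f a) ∧
           (∀ B ∈ S, ∀ C ∈ S, B ≠ C → Disjoint B C) then S.card else 0)
        (Finset.mem_univ T)
      simp only [if_pos hcond] at hle
      calc F.card = T.card := hTcard.symm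
        _ ≤ bsAt f a := by unfold bsAt; exact hle
    calc (F.biUnion id).card ≤ F.card * d := h2 ▸ h1
      _ ≤ bsAt f a * d := Nat.mul_le_mul_right d h3
  · -- hitting property
    intro m hm hmd
    by_contra hcon
    rw [Finset.not_nonempty_iff_eq_empty] at hcon
    have hAM : m.support ∈ M := Finset.mem_image.mpr
      ⟨m, Finset.mem_filter.mpr ⟨hm, hmd⟩, rfl⟩
    have hAne : m.support.Nonempty := by
      rw [← Finset.card_pos, hMcard _ hAM]
      omega
    have hdisj : ∀ A ∈ F, Disjoint m.support A := by
      intro A hA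
      rw [Finset.disjoint_left]
      intro i hi hiA
      have : i ∈ m.support ∩ F.biUnion id :=
        Finset.mem_inter.mpr ⟨hi, Finset.mem_biUnion.mpr ⟨A, hA, hiA⟩⟩
      rw [hcon] at this
      exact absurd this (Finset.notMem_empty i)
    by_cases hmem : m.support ∈ F
    · obtain ⟨i, hi⟩ := hAne
      exact (Finset.disjoint_left.mp (hdisj _ hmem) hi) hi
    · have hins : insert m.support F ∈ cand := by
        rw [hcand, Finset.mem_filter, Finset.mem_powerset]
        refine ⟨Finset.insert_subset hAM hFsub, ?_⟩
        intro A hA B hB hne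
        rcases Finset.mem_insert.mp hA with rfl | hA
        · rcases Finset.mem_insert.mp hB with rfl | hB
          · exact absurd rfl hne
          · exact hdisj B hB
        · rcases Finset.mem_insert.mp hB with rfl | hB
          · exact (hdisj A hA).symm
          · exact hFdisj A hA B hB hne
      have := hFmax _ hins
      rw [Finset.card_insert_of_notMem hmem] at this
      omega
end
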